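/- arXiv:math/0602507 — 3 statements merged into one kernel-verified Lean document; each statement's English description precedes it below -/
import Mathlib

section
/- For every odd integer Δ ≥ 11, there is a chordal graph G with tree-width 2, maximum degree Δ, and tree-partition-width tpw(G) ≥ (2/3)(Δ−1). -/
open SimpleGraph

/-- The quotient graph of a partition of the vertices of `G` given by a map `f`:
bags are elements of `ι`, and two distinct bags are adjacent iff some edge of `G`
joins them. -/
def quotientGraph {V ι : Type} (G : SimpleGraph V) (f : V → ι) : SimpleGraph ι where
  Adj a b := a ≠ b ∧ ∃ u v, G.Adj u v ∧ f u = a ∧ f v = b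
  symm := ⟨by
    rintro a b ⟨hab, u, v, h, hu, hv⟩
    exact ⟨hab.symm, v, u, h.symm, hv, hu⟩⟩
  loopless := ⟨by rintro a ⟨h, -⟩; exact h rfl⟩

/-- `f` describes a tree-partition of `G`: every bag (fiber of `f`) is nonempty
and the quotient graph is a forest. -/
def IsTreePartition {V ι : Type} (G : SimpleGraph V) (f : V → ι) : Prop :=
  Function.Surjective f ∧ (quotientGraph G f).IsAcyclic

/-- The tree-partition-width of `G`: the minimum over all tree-partitions of the
maximum bag size. -/
noncomputable def tpw {V : Type} (G : SimpleGraph V) : ℕ :=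
  sInf {w | ∃ (ι : Type) (f : V → ι), IsTreePartition G f ∧ ∀ i, (f ⁻¹' {i}).ncard ≤ w}

/-- A graph is chordal if it has no induced cycle of length at least four,
i.e. every induced cycle is a triangle. -/
def IsChordal {V : Type} (G : SimpleGraph V) : Prop :=
  ∀ n, 4 ≤ n → IsEmpty (cycleGraph n ↪g G)

/-- The tree-width of `G`: the minimum `k` such that `G` is a subgraph of a chordal
graph with no clique on `k + 2` vertices. -/
noncomputable def treewidth {V : Type} (G : SimpleGraph V) : ℕ :=
  sInf {k | ∃ H : SimpleGraph V, G ≤ H ∧ IsChordal H ∧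
    ∀ s : Set V, H.IsClique s → s.ncard ≤ k + 1}

/-- A vertex is simplicial if its neighbourhood is a clique. -/
def IsSimplicial {V : Type} (G : SimpleGraph V) (v : V) : Prop :=
  G.IsClique (G.neighborSet v)

/-- An independent set: no two of its vertices are adjacent. -/
def IsIndepSet {V : Type} (G : SimpleGraph V) (S : Set V) : Prop :=
  ∀ u ∈ S, ∀ v ∈ S, ¬ G.Adj u v

/-- `Δ` is the maximum vertex degree of the graph `G`. -/
def HasMaxDegree {V : Type} (G : SimpleGraph V) (Δ : ℕ) : Prop :=
  IsGreatest {d | ∃ v, (G.neighborSet v).ncard = d} Δ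

namespace Stmt9Aux

/-- role of a vertex: `true` = strong. -/
def role : List ℕ → Bool
  | [] => true
  | 0 :: l => !(role l)
  | (_+1) :: _ => true

/-- number of pages of the gadget rooted at a vertex. -/
def pc (cB cS : ℕ) (l : List ℕ) : ℕ := if role l then cB else cS

/-- valid vertex addresses -/
def Valid (cB cS h : ℕ) : List ℕ → Prop
  | [] => True
  | m :: l => Valid cB cS h l ∧ l.length < h ∧ (m = 0 ∨ (0 < m ∧ m ≤ pc cB cS l))

variable {cB cS h : ℕ}

lemma valid_nil : Valid cB cS h [] := trivial

lemma valid_cons_iff {m : ℕ} {l : List ℕ} :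
    Valid cB cS h (m :: l) ↔ Valid cB cS h l ∧ l.length < h ∧ (m = 0 ∨ (0 < m ∧ m ≤ pc cB cS l)) :=
  Iff.rfl

lemma Valid.tail {m : ℕ} {l : List ℕ} (hv : Valid cB cS h (m :: l)) : Valid cB cS h l := hv.1

lemma Valid.partner {l : List ℕ} (hv : Valid cB cS h l) (hl : l.length < h) :
    Valid cB cS h (0 :: l) := ⟨hv, hl, Or.inl rfl⟩

lemma Valid.page {l : List ℕ} (hv : Valid cB cS h l) (hl : l.length < h) {j : ℕ}
    (hj : j < pc cB cS l) : Valid cB cS h ((j+1) :: l) :=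
  ⟨hv, hl, Or.inr ⟨Nat.succ_pos j, hj⟩⟩

lemma Valid.length_le {l : List ℕ} (hv : Valid cB cS h l) : l.length ≤ h := by
  induction l with
  | nil => simp
  | cons m l ih =>
    have := hv.1
    have h2 := hv.2.1
    simpa using Nat.succ_le_of_lt h2

/-- the vertex type -/
def V (cB cS h : ℕ) : Type := {l : List ℕ // Valid cB cS h l}

instance : DecidableEq (V cB cS h) := fun a b =>
  decidable_of_iff (a.1 = b.1) Subtype.ext_iff.symm

def step (u v : List ℕ) : Prop :=
  (∃ m, v = m :: u) ∨ (∃ z j, u = 0 :: z ∧ v = (j+1) :: z)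

lemma step_irrefl (l : List ℕ) : ¬ step l l := by
  rintro (⟨m, hm⟩ | ⟨z, j, h1, h2⟩)
  · exact absurd (congrArg List.length hm) (by simp)
  · rw [h1] at h2; exact absurd (List.head_eq_of_cons_eq h2.symm) (by simp)

def Gr (cB cS h : ℕ) : SimpleGraph (V cB cS h) where
  Adj u v := step u.1 v.1 ∨ step v.1 u.1
  symm := ⟨by rintro u v (hs | hs) <;> [right; left] <;> exact hs⟩
  loopless := ⟨by rintro u (hs | hs) <;> exact step_irrefl u.1 hs⟩

lemma adj_iff {u v : V cB cS h} : (Gr cB cS h).Adj u v ↔ step u.1 v.1 ∨ step v.1 u.1 := Iff.rfl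

lemma adj_cons {u v : V cB cS h} {m : ℕ} (hm : v.1 = m :: u.1) : (Gr cB cS h).Adj u v :=
  Or.inl (Or.inl ⟨m, hm⟩)

lemma adj_page_partner {u v : V cB cS h} {z : List ℕ} {j : ℕ}
    (hu : u.1 = 0 :: z) (hv : v.1 = (j+1) :: z) : (Gr cB cS h).Adj u v :=
  Or.inl (Or.inr ⟨z, j, hu, hv⟩)

end Stmt9Aux

namespace Stmt9Aux

section Tri
variable {W ι : Type} {G : SimpleGraph W} {f : W → ι}

lemma no_triangle_quot (acyc : (quotientGraph G f).IsAcyclic)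
    {a b c : W} (hab : G.Adj a b) (hbc : G.Adj b c) (hac : G.Adj a c)
    (h1 : f a ≠ f b) (h2 : f b ≠ f c) (h3 : f a ≠ f c) : False := by
  set Q := quotientGraph G f with hQ
  have qab : Q.Adj (f a) (f b) := ⟨h1, a, b, hab, rfl, rfl⟩
  have qac : Q.Adj (f a) (f c) := ⟨h3, a, c, hac, rfl, rfl⟩
  have qcb : Q.Adj (f c) (f b) := ⟨fun hh => h2 hh.symm, c, b, hbc.symm, rfl, rfl⟩
  have hbridge := (isAcyclic_iff_forall_adj_isBridge.mp acyc) qab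
  rw [isBridge_iff] at hbridge
  apply hbridge
  have e1 : (Q \ fromEdgeSet {s(f a, f b)}).Adj (f a) (f c) := by
    rw [sdiff_adj, fromEdgeSet_adj]
    refine ⟨qac, ?_⟩
    rintro ⟨hmem, -⟩
    simp only [Set.mem_singleton_iff, Sym2.eq_iff] at hmem
    rcases hmem with ⟨-, hcb⟩ | ⟨hab', -⟩
    · exact h2 hcb.symm
    · exact h1 hab'
  have e2 : (Q \ fromEdgeSet {s(f a, f b)}).Adj (f c) (f b) := by
    rw [sdiff_adj, fromEdgeSet_adj]
    refine ⟨qcb, ?_⟩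
    rintro ⟨hmem, -⟩
    simp only [Set.mem_singleton_iff, Sym2.eq_iff] at hmem
    rcases hmem with ⟨hca, -⟩ | ⟨-, hca⟩
    · exact h3 hca.symm
    · exact h1 (hca.symm)
  exact ⟨Walk.cons e1 (Walk.cons e2 Walk.nil)⟩

lemma forced_quot (acyc : (quotientGraph G f).IsAcyclic)
    {a b c : W} (hab : G.Adj a b) (hbc : G.Adj b c) (hac : G.Adj a c)
    (hne : f a ≠ f b) : f c = f a ∨ f c = f b := by
  by_contra hcon
  push_neg at hcon
  exact no_triangle_quot acyc hab hbc hac hne (fun hh => hcon.2 hh.symm) (fun hh => hcon.1 hh.symm)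

end Tri

variable {cB cS h : ℕ}

lemma role_page {j : ℕ} {l : List ℕ} : role ((j+1) :: l) = true := by simp [role]

lemma role_partner {l : List ℕ} : role (0 :: l) = !role l := by simp [role]

lemma pc_of_role_true {l : List ℕ} (hr : role l = true) : pc cB cS l = cB := by
  simp [pc, hr]

lemma pc_of_role_false {l : List ℕ} (hr : role l = false) : pc cB cS l = cS := by
  simp [pc, hr]

lemma entries_le {l : List ℕ} (hv : Valid cB cS h l) : ∀ m ∈ l, m ≤ max cB cS := by
  induction l with
  | nil => simp
  | cons m l ih =>
    intro x hx
    rcases List.mem_cons.mp hx with rfl | hx'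
    · rcases hv.2.2 with rfl | ⟨-, hle⟩
      · exact Nat.zero_le _
      · refine hle.trans ?_
        unfold pc; split <;> simp
    · exact ih hv.1 x hx'

lemma finiteV : Finite (V cB cS h) := by
  classical
  set K := max cB cS with hK
  set T : Set (List (Fin (K+1))) := {l : List (Fin (K+1)) | l.length ≤ h} with hT
  have hTfin : T.Finite := List.finite_length_le _ h
  let F : V cB cS h → T := fun v =>
    ⟨v.1.map (fun m => (⟨min m K, by omega⟩ : Fin (K+1))), by
      simpa [hT] using v.2.length_le⟩
  have hInj : Function.Injective F := by
    intro u v huv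
    have h1 : (F u).1.map Fin.val = (F v).1.map Fin.val := by rw [huv]
    have recover : ∀ (w : V cB cS h), (F w).1.map Fin.val = w.1 := by
      intro w
      show (w.1.map _).map Fin.val = w.1
      rw [List.map_map]
      have : ∀ m ∈ w.1, m ≤ K := entries_le w.2
      calc w.1.map (fun m => min m K) = w.1.map id := by
            apply List.map_congr_left
            intro m hm
            simpa using this m hm
        _ = w.1 := by simp
    apply Subtype.ext
    rw [← recover u, ← recover v, h1]
  haveI := hTfin.to_subtype
  exact Finite.of_injective F hInj

lemma card_le_of_fiber {ι : Type} {f : V cB cS h → ι} {i : ι} {S : Finset (V cB cS h)}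
    (hS : ∀ x ∈ S, f x = i) {β : ℕ} (hb : (f ⁻¹' {i}).ncard ≤ β) : S.card ≤ β := by
  haveI := @finiteV cB cS h
  have h1 : (↑S : Set (V cB cS h)).ncard ≤ (f ⁻¹' {i}).ncard :=
    Set.ncard_le_ncard (fun x hx => hS x (by simpa using hx)) (Set.toFinite _)
  rw [Set.ncard_coe_finset] at h1
  exact h1.trans hb


section Forcing
variable {ι : Type} {f : V cB cS h → ι}

/-- dichotomy for strong vertices: some child is in the same bag. -/
lemma childSame_strong {β : ℕ} (hcB : β ≤ cB)
    (acyc : (quotientGraph (Gr cB cS h) f).IsAcyclic)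
    (hb : ∀ i, (f ⁻¹' {i}).ncard ≤ β)
    (v : V cB cS h) (hrole : role v.1 = true) (hlen : v.1.length < h) :
    ∃ c : V cB cS h, (∃ m, c.1 = m :: v.1) ∧ f c = f v := by
  classical
  set t : V cB cS h := ⟨0 :: v.1, v.2.partner hlen⟩ with ht
  by_cases hft : f t = f v
  · exact ⟨t, ⟨0, rfl⟩, hft⟩
  set pg : Fin cB → V cB cS h := fun j =>
    ⟨(j.1+1) :: v.1, v.2.page hlen (by rw [pc_of_role_true hrole]; exact j.2)⟩ with hpg
  by_cases hfp : ∃ j : Fin cB, f (pg j) = f v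
  · obtain ⟨j, hj⟩ := hfp
    exact ⟨pg j, ⟨j.1+1, rfl⟩, hj⟩
  push_neg at hfp
  -- all pages are in the bag of t
  have hpt : ∀ j : Fin cB, f (pg j) = f t := by
    intro j
    have hvt : (Gr cB cS h).Adj v t := adj_cons rfl
    have htp : (Gr cB cS h).Adj t (pg j) := adj_page_partner rfl rfl
    have hvp : (Gr cB cS h).Adj v (pg j) := adj_cons rfl
    have hne : f v ≠ f t := fun hh => hft hh.symm
    rcases forced_quot acyc hvt htp hvp hne with h1 | h1
    · exact absurd h1 (hfp j)
    · exact h1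
  set S : Finset (V cB cS h) := insert t (Finset.univ.image pg) with hS
  have hpg_inj : Function.Injective pg := by
    intro a b hab
    have h1 : (a.1+1) :: v.1 = (b.1+1) :: v.1 := congrArg Subtype.val hab
    injection h1 with h2 _
    exact Fin.ext (by omega)
  have ht_notin : t ∉ Finset.univ.image pg := by
    intro hmem
    obtain ⟨a, -, ha⟩ := Finset.mem_image.mp hmem
    have h1 : (a.1+1) :: v.1 = 0 :: v.1 := congrArg Subtype.val ha
    simp at h1
  have hcard : S.card = cB + 1 := by
    rw [hS, Finset.card_insert_of_notMem ht_notin,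
      Finset.card_image_of_injective _ hpg_inj, Finset.card_univ, Fintype.card_fin]
  have hsub : ∀ x ∈ S, f x = f t := by
    intro x hx
    rw [hS, Finset.mem_insert] at hx
    rcases hx with rfl | hx
    · rfl
    · obtain ⟨j, -, rfl⟩ := Finset.mem_image.mp hx
      exact hpt j
  have := card_le_of_fiber hsub (hb (f t))
  omega

/-- dichotomy for weak vertices. -/
lemma childSame_weak {β : ℕ} (hcB : β ≤ cB) (hcS : β ≤ 2*cS + 1)
    (acyc : (quotientGraph (Gr cB cS h) f).IsAcyclic)
    (hb : ∀ i, (f ⁻¹' {i}).ncard ≤ β)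
    (v : V cB cS h) (hrole : role v.1 = false) (hlen : v.1.length + 2 ≤ h) :
    ∃ c : V cB cS h, (∃ m, c.1 = m :: v.1) ∧ f c = f v := by
  classical
  have hlen1 : v.1.length < h := by omega
  set t : V cB cS h := ⟨0 :: v.1, v.2.partner hlen1⟩ with ht
  by_cases hft : f t = f v
  · exact ⟨t, ⟨0, rfl⟩, hft⟩
  set pg : Fin cS → V cB cS h := fun j =>
    ⟨(j.1+1) :: v.1, v.2.page hlen1 (by rw [pc_of_role_false hrole]; exact j.2)⟩ with hpg
  by_cases hfp : ∃ j : Fin cS, f (pg j) = f v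
  · obtain ⟨j, hj⟩ := hfp
    exact ⟨pg j, ⟨j.1+1, rfl⟩, hj⟩
  push_neg at hfp
  have hpt : ∀ j : Fin cS, f (pg j) = f t := by
    intro j
    have hvt : (Gr cB cS h).Adj v t := adj_cons rfl
    have htp : (Gr cB cS h).Adj t (pg j) := adj_page_partner rfl rfl
    have hvp : (Gr cB cS h).Adj v (pg j) := adj_cons rfl
    have hne : f v ≠ f t := fun hh => hft hh.symm
    rcases forced_quot acyc hvt htp hvp hne with h1 | h1
    · exact absurd h1 (hfp j)
    · exact h1
  -- units for each page
  have hu : ∀ j : Fin cS, ∃ c : V cB cS h, (∃ m, c.1 = m :: (pg j).1) ∧ f c = f (pg j) := by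
    intro j
    apply childSame_strong hcB acyc hb (pg j) role_page
    show ((j.1+1) :: v.1).length < h
    simp only [List.length_cons]
    omega
  choose u hu1 hu2 using hu
  -- unit for t
  have hrt : role t.1 = true := by
    show role (0 :: v.1) = true
    rw [role_partner, hrole]
    rfl
  obtain ⟨w, hw1, hw2⟩ : ∃ c : V cB cS h, (∃ m, c.1 = m :: t.1) ∧ f c = f t := by
    apply childSame_strong hcB acyc hb t hrt
    show (0 :: v.1).length < h
    simp only [List.length_cons]
    omega
  set S : Finset (V cB cS h) :=
    insert t (insert w ((Finset.univ.image pg) ∪ (Finset.univ.image u))) with hS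
  have hsub : ∀ x ∈ S, f x = f t := by
    intro x hx
    rw [hS] at hx
    simp only [Finset.mem_insert, Finset.mem_union, Finset.mem_image] at hx
    rcases hx with rfl | rfl | ⟨j, -, rfl⟩ | ⟨j, -, rfl⟩
    · rfl
    · exact hw2
    · exact hpt j
    · rw [hu2 j]; exact hpt j
  -- cardinality
  have hpg_inj : Function.Injective pg := by
    intro a b hab
    have h1 : (a.1+1) :: v.1 = (b.1+1) :: v.1 := congrArg Subtype.val hab
    injection h1 with h2 _
    exact Fin.ext (by omega)
  have hu_inj : Function.Injective u := by
    intro a b hab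
    obtain ⟨ma, hma⟩ := hu1 a
    obtain ⟨mb, hmb⟩ := hu1 b
    have : ma :: (pg a).1 = mb :: (pg b).1 := by rw [← hma, ← hmb, hab]
    have h2 : (pg a).1 = (pg b).1 := (List.cons.injEq _ _ _ _ ▸ this).2
    exact hpg_inj (Subtype.ext h2)
  have hdisj : Disjoint (Finset.univ.image pg) (Finset.univ.image u) := by
    rw [Finset.disjoint_left]
    rintro x hx hx'
    obtain ⟨j, -, rfl⟩ := Finset.mem_image.mp hx
    obtain ⟨j', -, hj'⟩ := Finset.mem_image.mp hx'
    obtain ⟨m, hm⟩ := hu1 j'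
    have : (pg j).1 = m :: (pg j').1 := by rw [hj'] at hm; exact hm ▸ rfl
    have hlen' := congrArg List.length this
    simp [hpg] at hlen'
  have hw_notin : w ∉ (Finset.univ.image pg) ∪ (Finset.univ.image u) := by
    obtain ⟨m, hm⟩ := hw1
    intro hmem
    rcases Finset.mem_union.mp hmem with hmem | hmem
    · obtain ⟨j, -, hj⟩ := Finset.mem_image.mp hmem
      have h1 : ((j.1+1) :: v.1 : List ℕ) = m :: 0 :: v.1 := by
        have h0 : (pg j).1 = w.1 := congrArg Subtype.val hj
        calc ((j.1+1) :: v.1 : List ℕ) = (pg j).1 := rfl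
          _ = w.1 := h0
          _ = m :: 0 :: v.1 := hm
      have := congrArg List.length h1
      simp at this
    · obtain ⟨j, -, hj⟩ := Finset.mem_image.mp hmem
      obtain ⟨mj, hmj⟩ := hu1 j
      have heq : mj :: (pg j).1 = m :: (0 :: v.1) := by
        rw [← hmj, hj, hm]
      injection heq with h2 h3
      have h4 : (j.1+1) :: v.1 = 0 :: v.1 := h3
      simp at h4
  have ht_notin : t ∉ insert w ((Finset.univ.image pg) ∪ (Finset.univ.image u)) := by
    intro hmem
    rcases Finset.mem_insert.mp hmem with hcon | hmem
    · obtain ⟨m, hm⟩ := hw1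
      rw [← hcon] at hm
      have := congrArg List.length hm
      simp at this
    · rcases Finset.mem_union.mp hmem with hmem | hmem
      · obtain ⟨j, -, hj⟩ := Finset.mem_image.mp hmem
        have h1 : (j.1+1) :: v.1 = 0 :: v.1 := congrArg Subtype.val hj
        simp at h1
      · obtain ⟨j, -, hj⟩ := Finset.mem_image.mp hmem
        obtain ⟨mj, hmj⟩ := hu1 j
        have h1 : (0 :: v.1 : List ℕ) = mj :: (pg j).1 := by
          calc (0 :: v.1 : List ℕ) = t.1 := rfl
            _ = (u j).1 := by rw [hj]
            _ = mj :: (pg j).1 := hmj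
        have h2 : ((pg j).1 : List ℕ).length = v.1.length + 1 := rfl
        have := congrArg List.length h1
        simp [h2] at this
  have hcard : S.card = 2*cS + 2 := by
    rw [hS, Finset.card_insert_of_notMem ht_notin, Finset.card_insert_of_notMem hw_notin,
      Finset.card_union_of_disjoint hdisj, Finset.card_image_of_injective _ hpg_inj,
      Finset.card_image_of_injective _ hu_inj, Finset.card_univ, Fintype.card_fin]
    ring
  have := card_le_of_fiber hsub (hb (f t))
  omega

lemma childSame {β : ℕ} (hcB : β ≤ cB) (hcS : β ≤ 2*cS + 1)
    (acyc : (quotientGraph (Gr cB cS h) f).IsAcyclic)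
    (hb : ∀ i, (f ⁻¹' {i}).ncard ≤ β)
    (v : V cB cS h) (hlen : v.1.length + 2 ≤ h) :
    ∃ c : V cB cS h, (∃ m, c.1 = m :: v.1) ∧ f c = f v := by
  rcases Bool.eq_false_or_eq_true (role v.1) with hr | hr
  · exact childSame_strong hcB acyc hb v hr (by omega)
  · exact childSame_weak hcB hcS acyc hb v hr hlen

def root : V cB cS h := ⟨[], valid_nil⟩

lemma chain {β : ℕ} (hcB : β ≤ cB) (hcS : β ≤ 2*cS + 1)
    (acyc : (quotientGraph (Gr cB cS h) f).IsAcyclic)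
    (hb : ∀ i, (f ⁻¹' {i}).ncard ≤ β)
    (k : ℕ) (hk : k + 2 ≤ h) :
    ∃ (v : V cB cS h) (S : Finset (V cB cS h)), v.1.length = k ∧ f v = f (root : V cB cS h) ∧
      S.card = k + 1 ∧ (∀ x ∈ S, f x = f (root : V cB cS h) ∧ x.1.length ≤ k) := by
  classical
  induction k with
  | zero =>
    exact ⟨root, {root}, rfl, rfl, by simp, by
      intro x hx
      rw [Finset.mem_singleton] at hx
      subst hx
      exact ⟨rfl, le_refl _⟩⟩
  | succ k ih =>
    obtain ⟨v, S, hvl, hvf, hSc, hSall⟩ := ih (by omega)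
    obtain ⟨c, ⟨m, hm⟩, hcf⟩ := childSame hcB hcS acyc hb v (by omega)
    have hclen : c.1.length = k + 1 := by rw [hm]; simp [hvl]
    have hcnot : c ∉ S := by
      intro hc
      have := (hSall c hc).2
      omega
    refine ⟨c, insert c S, hclen, by rw [hcf, hvf], ?_, ?_⟩
    · rw [Finset.card_insert_of_notMem hcnot, hSc]
    · intro x hx
      rcases Finset.mem_insert.mp hx with rfl | hx
      · exact ⟨by rw [hcf, hvf], by omega⟩
      · exact ⟨(hSall x hx).1, by have := (hSall x hx).2; omega⟩

theorem master {β : ℕ} (hcB : β ≤ cB) (hcS : β ≤ 2*cS + 1) (hh : β + 3 ≤ h)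
    {f : V cB cS h → ι}
    (acyc : (quotientGraph (Gr cB cS h) f).IsAcyclic)
    (hb : ∀ i, (f ⁻¹' {i}).ncard ≤ β) : False := by
  obtain ⟨v, S, -, -, hSc, hSall⟩ := chain hcB hcS acyc hb (β + 1) (by omega)
  have hsub : ∀ x ∈ S, f x = f (root : V cB cS h) := fun x hx => (hSall x hx).1
  have := card_le_of_fiber hsub (hb (f (root : V cB cS h)))
  omega

end Forcing


section Chordal

open Fin.NatCast Fin.CommRing

lemma adj_destruct {u v : V cB cS h} (hadj : (Gr cB cS h).Adj u v) :
    (∃ m, v.1 = m :: u.1) ∨ (∃ m, u.1 = m :: v.1) ∨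
    (∃ z j, u.1 = 0 :: z ∧ v.1 = (j+1) :: z) ∨ (∃ z j, v.1 = 0 :: z ∧ u.1 = (j+1) :: z) := by
  rcases hadj with (hs | hs) | (hs | hs)
  · exact Or.inl hs
  · exact Or.inr (Or.inr (Or.inl hs))
  · exact Or.inr (Or.inl hs)
  · exact Or.inr (Or.inr (Or.inr hs))

/-- neighbours of a page which are not longer than it -/
lemma nbr_of_page {b x : V cB cS h} {m : ℕ} {z : List ℕ}
    (hb : b.1 = (m+1) :: z) (hadj : (Gr cB cS h).Adj b x)
    (hlen : x.1.length ≤ b.1.length) : x.1 = z ∨ x.1 = 0 :: z := by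
  rcases adj_destruct hadj with ⟨m', hm⟩ | ⟨m', hm⟩ | ⟨z', j, h1, h2⟩ | ⟨z', j, h1, h2⟩
  · rw [hm, hb] at hlen
    simp at hlen
  · rw [hb] at hm
    injection hm with h1 h2
    exact Or.inl h2.symm
  · rw [hb] at h1
    simp at h1
  · rw [hb] at h2
    injection h2 with h3 h4
    rw [← h4] at h1
    exact Or.inr h1
/-- neighbours of a partner which are not longer than it -/
lemma nbr_of_partner {b x : V cB cS h} {z : List ℕ}
    (hb : b.1 = 0 :: z) (hadj : (Gr cB cS h).Adj b x)
    (hlen : x.1.length ≤ b.1.length) : x.1 = z ∨ ∃ j, x.1 = (j+1) :: z := by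
  rcases adj_destruct hadj with ⟨m', hm⟩ | ⟨m', hm⟩ | ⟨z', j, h1, h2⟩ | ⟨z', j, h1, h2⟩
  · rw [hm, hb] at hlen
    simp at hlen
  · rw [hb] at hm
    injection hm with h1 h2
    exact Or.inl h2.symm
  · rw [hb] at h1
    injection h1 with h3 h4
    rw [← h4] at h2
    exact Or.inr ⟨j, h2⟩
  · rw [hb] at h2
    simp at h2

lemma fin_cast_ne_zero {k : ℕ} {c : ℕ} (hc : 0 < c) (hck : c < k + 4) :
    ((c : ℕ) : Fin (k+4)) ≠ 0 := by
  intro hcon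
  have h1 := congrArg Fin.val hcon
  rw [Fin.val_cast_of_lt hck, Fin.val_zero] at h1
  omega

lemma cycle_adj_offset {k : ℕ} (i : Fin (k+4)) : (cycleGraph (k+4)).Adj i (i+1) := by
  show (cycleGraph (k+2+2)).Adj i (i+1)
  rw [SimpleGraph.cycleGraph_adj]
  right
  rw [add_comm i 1]
  exact add_sub_cancel_right 1 i

lemma cycle_nonadj_two {k : ℕ} (i : Fin (k+4)) : ¬ (cycleGraph (k+4)).Adj i (i+2) := by
  show ¬ (cycleGraph (k+2+2)).Adj i (i+2)
  rw [SimpleGraph.cycleGraph_adj]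
  rintro (hc | hc)
  · -- i - (i+2) = 1  →  3 = 0
    have h3 : ((3:ℕ) : Fin (k+4)) = 0 := by
      push_cast
      linear_combination -hc
    exact fin_cast_ne_zero (by norm_num) (by omega) h3
  · -- (i+2) - i = 1 → 1 = 0
    have h1 : ((1:ℕ) : Fin (k+4)) = 0 := by
      push_cast
      linear_combination hc
    exact fin_cast_ne_zero (by norm_num) (by omega) h1

lemma fin_add_one_ne {k : ℕ} (i : Fin (k+4)) : i + 1 ≠ i := by
  intro hcon
  have h1 : ((1:ℕ) : Fin (k+4)) = 0 := by
    push_cast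
    linear_combination hcon
  exact fin_cast_ne_zero (by norm_num) (by omega) h1

lemma fin_add_two_ne {k : ℕ} (i : Fin (k+4)) : i + 2 ≠ i := by
  intro hcon
  have h1 : ((2:ℕ) : Fin (k+4)) = 0 := by
    push_cast
    linear_combination hcon
  exact fin_cast_ne_zero (by norm_num) (by omega) h1

theorem chordalG :
    ∀ n, 4 ≤ n → IsEmpty (cycleGraph n ↪g (Gr cB cS h)) := by
  intro n hn
  obtain ⟨k, rfl⟩ : ∃ k, n = k + 4 := ⟨n - 4, by omega⟩
  constructor
  intro e
  obtain ⟨i, -, hmax⟩ := Finset.exists_max_image Finset.univ (fun i => (e i).1.length)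
    ⟨⟨0, by omega⟩, Finset.mem_univ _⟩
  have hmax' : ∀ j, (e j).1.length ≤ (e i).1.length := fun j => hmax j (Finset.mem_univ _)
  have einj : Function.Injective e := e.injective
  have hadj_right : (Gr cB cS h).Adj (e i) (e (i+1)) :=
    e.map_rel_iff.mpr (cycle_adj_offset i)
  have hadj_left : (Gr cB cS h).Adj (e (i-1)) (e i) := by
    apply e.map_rel_iff.mpr
    have h3 : (i - 1) + 1 = i := by ring
    have h4 := cycle_adj_offset (i-1)
    rwa [h3] at h4
  have hnadj : ¬ (Gr cB cS h).Adj (e (i-1)) (e (i+1)) := by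
    intro hcon
    have h5 := e.map_rel_iff.mp hcon
    have h2 : (i - 1) + 2 = i + 1 := by ring
    rw [← h2] at h5
    exact cycle_nonadj_two (i-1) h5
  have hne_ac : e (i-1) ≠ e (i+1) := by
    intro hcon
    have h1 := einj hcon
    have h2 : (i - 1) + 2 = i + 1 := by ring
    rw [← h2] at h1
    exact fin_add_two_ne (i-1) h1.symm
  match hshape : (e i).1 with
  | [] =>
    have h1 : (e (i-1)).1.length ≤ 0 := by
      have h0 := hmax' (i-1)
      rw [hshape] at h0
      simpa using h0
    have h2 : (e (i-1)).1 = [] := List.length_eq_zero_iff.mp (by omega)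
    have h3 : e (i-1) = e i := Subtype.ext (by rw [h2, hshape])
    have h4 := einj h3
    have h5 : (i - 1) + 1 = i := by ring
    exact fin_add_one_ne (i-1) (h5.trans h4.symm)
  | (m+1) :: z =>
    have hA := nbr_of_page hshape hadj_left.symm (hmax' (i-1))
    have hC := nbr_of_page hshape hadj_right (hmax' (i+1))
    have hadj_ac : (Gr cB cS h).Adj (e (i-1)) (e (i+1)) := by
      rcases hA with h1 | h1 <;> rcases hC with h2 | h2
      · exact absurd (Subtype.ext (h1.trans h2.symm)) hne_ac
      · exact adj_cons (by rw [h2, h1])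
      · exact (adj_cons (by rw [h1, h2])).symm
      · exact absurd (Subtype.ext (h1.trans h2.symm)) hne_ac
    exact hnadj hadj_ac
  | 0 :: z =>
    have hA := nbr_of_partner hshape hadj_left.symm (hmax' (i-1))
    have hC := nbr_of_partner hshape hadj_right (hmax' (i+1))
    rcases hA with h1 | ⟨j1, h1⟩
    · rcases hC with h2 | ⟨j2, h2⟩
      · exact absurd (Subtype.ext (h1.trans h2.symm)) hne_ac
      · exact hnadj (adj_cons (by rw [h2, h1]))
    · rcases hC with h2 | ⟨j2, h2⟩
      · exact hnadj ((adj_cons (by rw [h1, h2])).symm)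
      · have hadj_cd : (Gr cB cS h).Adj (e (i+1)) (e (i+2)) := by
          apply e.map_rel_iff.mpr
          have h3 : (i + 1) + 1 = i + 2 := by ring
          have h4 := cycle_adj_offset (i+1)
          rwa [h3] at h4
        have hlen_c : (e (i+1)).1.length = (e i).1.length := by
          rw [h2, hshape]; simp
        have hD := nbr_of_page h2 hadj_cd (le_trans (hmax' (i+2)) (le_of_eq hlen_c.symm))
        rcases hD with h3 | h3
        · have hdb : (Gr cB cS h).Adj (e (i+2)) (e i) := adj_cons (by rw [hshape, h3])
          have h5 := e.map_rel_iff.mp hdb.symm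
          exact cycle_nonadj_two i h5
        · have h4 : e (i+2) = e i := Subtype.ext (by rw [h3, hshape])
          exact fin_add_two_ne i (einj h4)

end Chordal


section Clique

lemma pages_not_adj {x y : V cB cS h} {z : List ℕ} {j1 j2 : ℕ}
    (hx : x.1 = (j1+1) :: z) (hy : y.1 = (j2+1) :: z) : ¬ (Gr cB cS h).Adj x y := by
  rintro ((⟨m, hm⟩ | ⟨z', j, ha, hb⟩) | (⟨m, hm⟩ | ⟨z', j, ha, hb⟩))
  · rw [hx, hy] at hm
    have := congrArg List.length hm
    simp at this
  · rw [hx] at ha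
    simp at ha
  · rw [hx, hy] at hm
    have := congrArg List.length hm
    simp at this
  · rw [hy] at ha
    simp at ha

lemma no_four_clique {t : Finset (V cB cS h)} (hcl : ∀ x ∈ t, ∀ y ∈ t, x ≠ y → (Gr cB cS h).Adj x y)
    (hcard : t.card = 4) : False := by
  classical
  have hne : t.Nonempty := by rw [← Finset.card_pos, hcard]; norm_num
  obtain ⟨x, hxt, hmax⟩ := Finset.exists_max_image t (fun a => a.1.length) hne
  have herase : (t.erase x).card = 3 := by rw [Finset.card_erase_of_mem hxt, hcard]
  obtain ⟨o1, o2, o3, h12, h13, h23, hoeq⟩ := Finset.card_eq_three.mp herase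
  have hmem : ∀ o ∈ ({o1, o2, o3} : Finset (V cB cS h)), o ∈ t ∧ o ≠ x := by
    intro o ho
    rw [← hoeq] at ho
    exact ⟨Finset.mem_of_mem_erase ho, Finset.ne_of_mem_erase ho⟩
  have h1 := hmem o1 (by simp)
  have h2 := hmem o2 (by simp)
  have h3 := hmem o3 (by simp)
  have hadj : ∀ o ∈ ({o1, o2, o3} : Finset (V cB cS h)), (Gr cB cS h).Adj x o := by
    intro o ho
    obtain ⟨hot, hox⟩ := hmem o ho
    exact hcl x hxt o hot (Ne.symm hox)
  have hlen : ∀ o ∈ ({o1, o2, o3} : Finset (V cB cS h)), o.1.length ≤ x.1.length := by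
    intro o ho
    exact hmax o (hmem o ho).1
  -- case analysis on shape of x
  match hshape : x.1 with
  | [] =>
    have : o1.1 = [] := List.length_eq_zero_iff.mp (by
      have := hlen o1 (by simp); rw [hshape] at this; simpa using this)
    exact (h1.2) (Subtype.ext (by rw [this, hshape]))
  | (m+1) :: z =>
    -- all three others lie in {z, 0::z} : impossible since they are distinct
    have hsh : ∀ o ∈ ({o1, o2, o3} : Finset (V cB cS h)), o.1 = z ∨ o.1 = 0 :: z := by
      intro o ho
      exact nbr_of_page hshape (hadj o ho) (hlen o ho)
    have e1 := hsh o1 (by simp)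
    have e2 := hsh o2 (by simp)
    have e3 := hsh o3 (by simp)
    rcases e1 with e1 | e1 <;> rcases e2 with e2 | e2 <;> rcases e3 with e3 | e3
    · exact h12 (Subtype.ext (e1.trans e2.symm))
    · exact h12 (Subtype.ext (e1.trans e2.symm))
    · exact h13 (Subtype.ext (e1.trans e3.symm))
    · exact h23 (Subtype.ext (e2.trans e3.symm))
    · exact h23 (Subtype.ext (e2.trans e3.symm))
    · exact h13 (Subtype.ext (e1.trans e3.symm))
    · exact h12 (Subtype.ext (e1.trans e2.symm))
    · exact h12 (Subtype.ext (e1.trans e2.symm))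
  | 0 :: z =>
    have hsh : ∀ o ∈ ({o1, o2, o3} : Finset (V cB cS h)), o.1 = z ∨ ∃ j, o.1 = (j+1) :: z := by
      intro o ho
      exact nbr_of_partner hshape (hadj o ho) (hlen o ho)
    have e1 := hsh o1 (by simp)
    have e2 := hsh o2 (by simp)
    have e3 := hsh o3 (by simp)
    have hadj12 : (Gr cB cS h).Adj o1 o2 := hcl o1 h1.1 o2 h2.1 h12
    have hadj13 : (Gr cB cS h).Adj o1 o3 := hcl o1 h1.1 o3 h3.1 h13
    have hadj23 : (Gr cB cS h).Adj o2 o3 := hcl o2 h2.1 o3 h3.1 h23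
    rcases e1 with e1 | ⟨ja, e1⟩ <;> rcases e2 with e2 | ⟨jb, e2⟩ <;> rcases e3 with e3 | ⟨jc, e3⟩
    · exact h12 (Subtype.ext (e1.trans e2.symm))
    · exact h12 (Subtype.ext (e1.trans e2.symm))
    · exact h13 (Subtype.ext (e1.trans e3.symm))
    · exact pages_not_adj e2 e3 hadj23
    · exact h23 (Subtype.ext (e2.trans e3.symm))
    · exact pages_not_adj e1 e3 hadj13
    · exact pages_not_adj e1 e2 hadj12
    · exact pages_not_adj e1 e2 hadj12

lemma clique_le_three {s : Set (V cB cS h)} (hs : (Gr cB cS h).IsClique s) : s.ncard ≤ 3 := by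
  classical
  haveI := @finiteV cB cS h
  by_contra hcon
  push_neg at hcon
  have hfin : s.Finite := Set.toFinite s
  have hcard : 4 ≤ hfin.toFinset.card := by
    rw [Set.ncard_eq_toFinset_card s hfin] at hcon
    omega
  obtain ⟨t, hts, htcard⟩ := Finset.exists_subset_card_eq hcard
  apply no_four_clique (t := t) _ htcard
  intro a hat b hbt hab
  have has : a ∈ s := by have := hts hat; rwa [Set.Finite.mem_toFinset] at this
  have hbs : b ∈ s := by have := hts hbt; rwa [Set.Finite.mem_toFinset] at this
  exact hs has hbs hab

end Clique


section Degree

lemma nbr_shapes {v x : V cB cS h} (hadj : (Gr cB cS h).Adj v x) :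
    (x.1 = 0 :: v.1) ∨ (∃ j, j < pc cB cS v.1 ∧ x.1 = (j+1) :: v.1) ∨ (∃ m, v.1 = m :: x.1) ∨
    (∃ z j, v.1 = 0 :: z ∧ j < pc cB cS z ∧ x.1 = (j+1) :: z) ∨
    (∃ z j, x.1 = 0 :: z ∧ v.1 = (j+1) :: z) := by
  rcases adj_destruct hadj with ⟨m, hm⟩ | ⟨m, hm⟩ | ⟨z, j, h1, h2⟩ | ⟨z, j, h1, h2⟩
  · -- x is a child of v
    have hval := x.2
    rw [hm] at hval
    rcases hval.2.2 with rfl | ⟨hpos, hle⟩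
    · exact Or.inl hm
    · refine Or.inr (Or.inl ⟨m - 1, by omega, ?_⟩)
      rw [hm]
      congr 1
      omega
  · exact Or.inr (Or.inr (Or.inl ⟨m, hm⟩))
  · -- v = 0 :: z, x = (j+1) :: z
    have hval := x.2
    rw [h2] at hval
    rcases hval.2.2 with hcon | ⟨-, hle⟩
    · omega
    · exact Or.inr (Or.inr (Or.inr (Or.inl ⟨z, j, h1, by omega, h2⟩)))
  · exact Or.inr (Or.inr (Or.inr (Or.inr ⟨z, j, h1, h2⟩)))

lemma pc_partner_sum {z : List ℕ} : pc cB cS z + pc cB cS (0 :: z) = cB + cS := by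
  unfold pc
  rw [role_partner]
  cases role z <;> simp <;> ring

lemma ncard_nbr_le (hcS1 : 1 ≤ cS) (v : V cB cS h) :
    ((Gr cB cS h).neighborSet v).ncard ≤ cB + cS + 2 := by
  classical
  have himg : ((Gr cB cS h).neighborSet v).ncard
      = (Subtype.val '' ((Gr cB cS h).neighborSet v)).ncard :=
    (Set.ncard_image_of_injective _ Subtype.val_injective).symm
  -- the candidate superset, depending on the shape of v
  have main : ∀ (L : Finset (List ℕ)),
      (Subtype.val '' ((Gr cB cS h).neighborSet v)) ⊆ ↑L →
      L.card ≤ cB + cS + 2 → ((Gr cB cS h).neighborSet v).ncard ≤ cB + cS + 2 := by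
    intro L hsub hcard
    rw [himg]
    calc (Subtype.val '' ((Gr cB cS h).neighborSet v)).ncard ≤ (↑L : Set (List ℕ)).ncard :=
          Set.ncard_le_ncard hsub (L.finite_toSet)
      _ = L.card := Set.ncard_coe_finset L
      _ ≤ cB + cS + 2 := hcard
  match hshape : v.1 with
  | [] =>
    apply main (insert (0 :: v.1) ((Finset.range (pc cB cS v.1)).image (fun j => (j+1) :: v.1)))
    · rintro x ⟨y, hy, rfl⟩
      rcases nbr_shapes hy with h1 | ⟨j, hj, h1⟩ | ⟨m, h1⟩ | ⟨z, j, h1, hj, h2⟩ | ⟨z, j, h1, h2⟩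
      · simp [h1]
      · simp only [Finset.coe_insert, Set.mem_insert_iff, Finset.coe_image, Set.mem_image,
          Finset.mem_coe, Finset.mem_range]
        exact Or.inr ⟨j, by simpa using hj, h1.symm⟩
      · rw [hshape] at h1; simp at h1
      · rw [hshape] at h1; simp at h1
      · rw [hshape] at h2; simp at h2
    · calc _ ≤ ((Finset.range (pc cB cS v.1)).image (fun j => (j+1) :: v.1)).card + 1 :=
            Finset.card_insert_le _ _
        _ ≤ pc cB cS v.1 + 1 := by
            have := Finset.card_image_le (s := Finset.range (pc cB cS v.1))
              (f := fun j => (j+1) :: v.1)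
            simp only [Finset.card_range] at this
            omega
        _ ≤ cB + cS + 2 := by
            unfold pc
            split <;> omega
  | 0 :: z =>
    apply main (insert z (((Finset.range (pc cB cS z)).image (fun j => (j+1) :: z)) ∪
      (insert (0 :: v.1) ((Finset.range (pc cB cS v.1)).image (fun j => (j+1) :: v.1)))))
    · rintro x ⟨y, hy, rfl⟩
      simp only [Finset.coe_insert, Set.mem_insert_iff, Finset.coe_union, Finset.coe_image,
        Set.mem_union, Set.mem_image, Finset.mem_coe, Finset.mem_range]
      rcases nbr_shapes hy with h1 | ⟨j, hj, h1⟩ | ⟨m, h1⟩ | ⟨z', j, h1, hj, h2⟩ | ⟨z', j, h1, h2⟩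
      · exact Or.inr (Or.inr (Or.inl h1))
      · exact Or.inr (Or.inr (Or.inr ⟨j, hj, h1.symm⟩))
      · rw [hshape] at h1
        injection h1 with h2 h3
        exact Or.inl h3.symm
      · rw [hshape] at h1
        injection h1 with h2 h3
        subst h3
        exact Or.inr (Or.inl ⟨j, hj, h2.symm⟩)
      · rw [hshape] at h2; simp at h2
    · have hsum := @pc_partner_sum cB cS z
      have c1 : ((Finset.range (pc cB cS z)).image (fun j => (j+1) :: z)).card ≤ pc cB cS z := by
        have := Finset.card_image_le (s := Finset.range (pc cB cS z)) (f := fun j => (j+1) :: z)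
        simpa using this
      have c2 : ((Finset.range (pc cB cS v.1)).image (fun j => (j+1) :: v.1)).card
          ≤ pc cB cS v.1 := by
        have := Finset.card_image_le (s := Finset.range (pc cB cS v.1))
          (f := fun j => (j+1) :: v.1)
        simpa using this
      calc _ ≤ (((Finset.range (pc cB cS z)).image (fun j => (j+1) :: z)) ∪
            (insert (0 :: v.1) ((Finset.range (pc cB cS v.1)).image
              (fun j => (j+1) :: v.1)))).card + 1 := Finset.card_insert_le _ _
        _ ≤ ((Finset.range (pc cB cS z)).image (fun j => (j+1) :: z)).card +
            (insert (0 :: v.1) ((Finset.range (pc cB cS v.1)).image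
              (fun j => (j+1) :: v.1))).card + 1 := by
            have := Finset.card_union_le ((Finset.range (pc cB cS z)).image (fun j => (j+1) :: z))
              (insert (0 :: v.1) ((Finset.range (pc cB cS v.1)).image (fun j => (j+1) :: v.1)))
            omega
        _ ≤ pc cB cS z + (pc cB cS v.1 + 1) + 1 := by
            have := Finset.card_insert_le (0 :: v.1)
              ((Finset.range (pc cB cS v.1)).image (fun j => (j+1) :: v.1))
            omega
        _ ≤ cB + cS + 2 := by rw [hshape] at *; omega
  | (m+1) :: z =>
    apply main (insert z (insert (0 :: z) (insert (0 :: v.1)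
      ((Finset.range (pc cB cS v.1)).image (fun j => (j+1) :: v.1)))))
    · rintro x ⟨y, hy, rfl⟩
      simp only [Finset.coe_insert, Set.mem_insert_iff, Finset.coe_image,
        Set.mem_image, Finset.mem_coe, Finset.mem_range]
      rcases nbr_shapes hy with h1 | ⟨j, hj, h1⟩ | ⟨m', h1⟩ | ⟨z', j, h1, hj, h2⟩ | ⟨z', j, h1, h2⟩
      · exact Or.inr (Or.inr (Or.inl h1))
      · exact Or.inr (Or.inr (Or.inr ⟨j, hj, h1.symm⟩))
      · rw [hshape] at h1
        injection h1 with h2 h3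
        exact Or.inl h3.symm
      · rw [hshape] at h1; simp at h1
      · rw [hshape] at h2
        injection h2 with h3 h4
        rw [← h4] at h1
        exact Or.inr (Or.inl h1)
    · have hpc : pc cB cS v.1 = cB := by
        rw [hshape]; exact pc_of_role_true role_page
      have c2 : ((Finset.range (pc cB cS v.1)).image (fun j => (j+1) :: v.1)).card
          ≤ pc cB cS v.1 := by
        have := Finset.card_image_le (s := Finset.range (pc cB cS v.1))
          (f := fun j => (j+1) :: v.1)
        simpa using this
      have i1 := Finset.card_insert_le (0 :: v.1)
        ((Finset.range (pc cB cS v.1)).image (fun j => (j+1) :: v.1))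
      have i2 := Finset.card_insert_le (0 :: z) (insert (0 :: v.1)
        ((Finset.range (pc cB cS v.1)).image (fun j => (j+1) :: v.1)))
      have i3 := Finset.card_insert_le z (insert (0 :: z) (insert (0 :: v.1)
        ((Finset.range (pc cB cS v.1)).image (fun j => (j+1) :: v.1))))
      omega

end Degree


section DegreeExact

variable (cB cS h : ℕ)

/-- the distinguished vertex `[0,1]` (partner of the first page of the root). -/
def vstar (hcB1 : 1 ≤ cB) (hh : 3 ≤ h) : V cB cS h :=
  ⟨[0, 1], by
    refine ⟨⟨trivial, by simp only [List.length_nil]; omega, Or.inr ⟨by omega, ?_⟩⟩,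
      by simp only [List.length_cons, List.length_nil]; omega, Or.inl rfl⟩
    show 1 ≤ pc cB cS []
    unfold pc role
    simp
    omega⟩

variable {cB cS h : ℕ}

lemma role_one : role [1] = true := role_page

lemma role_zero_one : role [0, 1] = false := by
  show role (0 :: [1]) = false
  rw [role_partner, role_one]
  rfl

lemma vstar_exact (hcB1 : 1 ≤ cB) (hcS1 : 1 ≤ cS) (hh : 3 ≤ h) :
    ((Gr cB cS h).neighborSet (vstar cB cS h hcB1 hh)).ncard = cB + cS + 2 := by
  classical
  set v : V cB cS h := vstar cB cS h hcB1 hh with hv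
  have hv1 : v.1 = [0, 1] := rfl
  have hval1 : Valid cB cS h [1] := ⟨trivial, by simp only [List.length_nil]; omega,
    Or.inr ⟨by omega, by
      show 1 ≤ pc cB cS []
      unfold pc role; simp; omega⟩⟩
  set n1 : V cB cS h := ⟨[1], hval1⟩ with hn1
  have hpc1 : pc cB cS [1] = cB := pc_of_role_true role_one
  have hpcv : pc cB cS [0, 1] = cS := pc_of_role_false role_zero_one
  set pgP : Fin cB → V cB cS h := fun j =>
    ⟨(j.1+1) :: [1], hval1.page (by simp only [List.length_cons, List.length_nil]; omega)
      (by rw [hpc1]; exact j.2)⟩ with hpgP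
  set n2 : V cB cS h := ⟨[0, 0, 1], v.2.partner
    (by rw [hv1]; simp only [List.length_cons, List.length_nil]; omega)⟩ with hn2
  set pgO : Fin cS → V cB cS h := fun j =>
    ⟨(j.1+1) :: [0, 1], v.2.page
      (by rw [hv1]; simp only [List.length_cons, List.length_nil]; omega)
      (by rw [show (v.1 : List ℕ) = [0,1] from rfl, hpcv]; exact j.2)⟩ with hpgO
  set N : Finset (V cB cS h) :=
    insert n1 (insert n2 ((Finset.univ.image pgP) ∪ (Finset.univ.image pgO))) with hN
  have hset : (Gr cB cS h).neighborSet v = ↑N := by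
    ext x
    simp only [mem_neighborSet, hN, Finset.coe_insert, Set.mem_insert_iff, Finset.coe_union,
      Finset.coe_image, Set.mem_union, Set.mem_image, Finset.mem_coe, Finset.mem_univ,
      true_and, Finset.coe_univ, Set.mem_univ]
    constructor
    · intro hadj
      rcases nbr_shapes hadj with h1 | ⟨j, hj, h1⟩ | ⟨m, h1⟩ | ⟨z', j, h1, hj, h2⟩ | ⟨z', j, h1, h2⟩
      · right; left
        apply Subtype.ext
        rw [h1, hv1]
      · right; right; right
        rw [hv1] at h1
        rw [hv1, hpcv] at hj
        exact ⟨⟨j, hj⟩, Subtype.ext h1.symm⟩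
      · left
        apply Subtype.ext
        rw [hv1] at h1
        injection h1 with h2 h3
        rw [hn1, ← h3]
      · right; right; left
        rw [hv1] at h1
        injection h1 with h2 h3
        subst h3
        rw [hpc1] at hj
        exact ⟨⟨j, hj⟩, Subtype.ext h2.symm⟩
      · rw [hv1] at h2
        simp at h2
    · rintro (rfl | rfl | ⟨j, rfl⟩ | ⟨j, rfl⟩)
      · exact (adj_cons (u := n1) (v := v) (m := 0) (by rw [hv1])).symm
      · exact adj_cons (u := v) (v := n2) (m := 0) (by rw [hv1])
      · exact adj_page_partner (z := [1]) (j := j.1) (by rw [hv1]) rfl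
      · exact adj_cons (u := v) (m := j.1 + 1) (by rw [hv1])
  rw [hset, Set.ncard_coe_finset]
  -- cardinality
  have hinjP : Function.Injective pgP := by
    intro a b hab
    have h1 : (a.1+1) :: [1] = (b.1+1) :: [1] := congrArg Subtype.val hab
    injection h1 with h2 _
    exact Fin.ext (by omega)
  have hinjO : Function.Injective pgO := by
    intro a b hab
    have h1 : (a.1+1) :: [0, 1] = (b.1+1) :: [0, 1] := congrArg Subtype.val hab
    injection h1 with h2 _
    exact Fin.ext (by omega)
  have hdisj : Disjoint (Finset.univ.image pgP) (Finset.univ.image pgO) := by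
    rw [Finset.disjoint_left]
    rintro x hx hx'
    obtain ⟨j, -, rfl⟩ := Finset.mem_image.mp hx
    obtain ⟨j', -, hj'⟩ := Finset.mem_image.mp hx'
    have h1 : ((j'.1+1) :: [0, 1] : List ℕ) = (j.1+1) :: [1] := congrArg Subtype.val hj'
    have := congrArg List.length h1
    simp at this
  have hn2_notin : n2 ∉ (Finset.univ.image pgP) ∪ (Finset.univ.image pgO) := by
    intro hmem
    rcases Finset.mem_union.mp hmem with hmem | hmem
    · obtain ⟨j, -, hj⟩ := Finset.mem_image.mp hmem
      have h1 : ((j.1+1) :: [1] : List ℕ) = [0, 0, 1] := congrArg Subtype.val hj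
      have := congrArg List.length h1
      simp at this
    · obtain ⟨j, -, hj⟩ := Finset.mem_image.mp hmem
      have h1 : ((j.1+1) :: [0, 1] : List ℕ) = [0, 0, 1] := congrArg Subtype.val hj
      injection h1 with h2 _
      omega
  have hn1_notin : n1 ∉ insert n2 ((Finset.univ.image pgP) ∪ (Finset.univ.image pgO)) := by
    intro hmem
    rcases Finset.mem_insert.mp hmem with hcon | hmem
    · have h1 : ([1] : List ℕ) = [0, 0, 1] := congrArg Subtype.val hcon
      simp at h1
    · rcases Finset.mem_union.mp hmem with hmem | hmem
      · obtain ⟨j, -, hj⟩ := Finset.mem_image.mp hmem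
        have h1 : ((j.1+1) :: [1] : List ℕ) = [1] := congrArg Subtype.val hj
        simp at h1
      · obtain ⟨j, -, hj⟩ := Finset.mem_image.mp hmem
        have h1 : ((j.1+1) :: [0, 1] : List ℕ) = [1] := congrArg Subtype.val hj
        simp at h1
  rw [hN, Finset.card_insert_of_notMem hn1_notin, Finset.card_insert_of_notMem hn2_notin,
    Finset.card_union_of_disjoint hdisj, Finset.card_image_of_injective _ hinjP,
    Finset.card_image_of_injective _ hinjO, Finset.card_univ, Finset.card_univ,
    Fintype.card_fin, Fintype.card_fin]
  try ring

lemma hasMaxDegreeG (hcB1 : 1 ≤ cB) (hcS1 : 1 ≤ cS) (hh : 3 ≤ h) :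
    HasMaxDegree (Gr cB cS h) (cB + cS + 2) := by
  constructor
  · exact ⟨vstar cB cS h hcB1 hh, vstar_exact hcB1 hcS1 hh⟩
  · rintro dd ⟨v, rfl⟩
    exact ncard_nbr_le hcS1 v

end DegreeExact


section Assembly

lemma quotient_unit_acyclic {W : Type} (G : SimpleGraph W) :
    (quotientGraph G (fun _ : W => (() : Unit))).IsAcyclic := by
  have hbot : quotientGraph G (fun _ : W => (() : Unit)) = ⊥ := by
    ext a b
    simp only [quotientGraph, SimpleGraph.bot_adj, iff_false]
    rintro ⟨hne, -⟩
    exact hne (Subsingleton.elim a b)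
  rw [hbot]
  exact isAcyclic_bot

lemma tpw_ge {β : ℕ} (hcB : β ≤ cB) (hcS : β ≤ 2*cS + 1) (hh : β + 3 ≤ h) :
    β + 1 ≤ tpw (Gr cB cS h) := by
  classical
  haveI := @finiteV cB cS h
  set St := {w | ∃ (ι : Type) (f : V cB cS h → ι), IsTreePartition (Gr cB cS h) f ∧
    ∀ i, (f ⁻¹' {i}).ncard ≤ w} with hSt
  have hne : St.Nonempty := by
    refine ⟨(Set.univ : Set (V cB cS h)).ncard, Unit, fun _ => (), ⟨?_, ?_⟩, ?_⟩
    · intro u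
      exact ⟨root, rfl⟩
    · exact quotient_unit_acyclic _
    · intro i
      exact Set.ncard_le_ncard (Set.subset_univ _) (Set.toFinite _)
  have hmem : sInf St ∈ St := Nat.sInf_mem hne
  obtain ⟨ι, f, ⟨hsurj, hacyc⟩, hbound⟩ := hmem
  show β + 1 ≤ sInf St
  by_contra hcon
  push_neg at hcon
  have hle : sInf St ≤ β := by omega
  exact master hcB hcS hh hacyc (fun i => (hbound i).trans hle)

lemma tw_two (hcB1 : 1 ≤ cB) (hcS1 : 1 ≤ cS) (hh : 3 ≤ h) :
    treewidth (Gr cB cS h) = 2 := by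
  classical
  have h2mem : 2 ∈ {k | ∃ H : SimpleGraph (V cB cS h), Gr cB cS h ≤ H ∧ IsChordal H ∧
      ∀ s : Set (V cB cS h), H.IsClique s → s.ncard ≤ k + 1} := by
    refine ⟨Gr cB cS h, le_refl _, chordalG, ?_⟩
    intro s hs
    have := clique_le_three hs
    omega
  -- the triangle
  have hh1 : (0 : ℕ) < h := by omega
  set a0 : V cB cS h := root with ha0
  set a1 : V cB cS h := ⟨[0], valid_nil.partner (by simpa using hh1)⟩ with ha1
  set a2 : V cB cS h := ⟨[1], valid_nil.page (by simpa using hh1) (by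
    show 0 < pc cB cS []
    unfold pc role
    simp
    omega)⟩ with ha2
  have hadj01 : (Gr cB cS h).Adj a0 a1 := adj_cons (m := 0) rfl
  have hadj02 : (Gr cB cS h).Adj a0 a2 := adj_cons (m := 1) rfl
  have hadj12 : (Gr cB cS h).Adj a1 a2 := adj_page_partner (z := []) (j := 0) rfl rfl
  have hne01 : a0 ≠ a1 := by
    intro hcon
    have : ([] : List ℕ) = [0] := congrArg Subtype.val hcon
    simp at this
  have hne02 : a0 ≠ a2 := by
    intro hcon
    have : ([] : List ℕ) = [1] := congrArg Subtype.val hcon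
    simp at this
  have hne12 : a1 ≠ a2 := by
    intro hcon
    have : ([0] : List ℕ) = [1] := congrArg Subtype.val hcon
    simp at this
  apply le_antisymm
  · exact Nat.sInf_le h2mem
  · apply le_csInf ⟨2, h2mem⟩
    rintro k ⟨H, hGH, -, hcl⟩
    have hclique : H.IsClique {a0, a1, a2} := by
      intro x hx y hy hxy
      simp only [Set.mem_insert_iff, Set.mem_singleton_iff] at hx hy
      rcases hx with rfl | rfl | rfl <;> rcases hy with rfl | rfl | rfl
      · exact absurd rfl hxy
      · exact hGH hadj01
      · exact hGH hadj02
      · exact hGH hadj01.symm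
      · exact absurd rfl hxy
      · exact hGH hadj12
      · exact hGH hadj02.symm
      · exact hGH hadj12.symm
      · exact absurd rfl hxy
    have h3 : ({a0, a1, a2} : Set (V cB cS h)).ncard = 3 :=
      Set.ncard_eq_three.mpr ⟨a0, a1, a2, hne01, hne02, hne12, rfl⟩
    have := hcl _ hclique
    omega

end Assembly

end Stmt9Aux

/-- For every odd `Δ ≥ 11` there is a chordal graph with tree-width `2`, maximum
degree `Δ`, and tree-partition-width at least `(2/3)(Δ-1)`. -/
theorem stmt9 (Δ : ℕ) (hodd : Odd Δ) (hΔ : 11 ≤ Δ) :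
    ∃ (V : Type) (_ : Fintype V) (G : SimpleGraph V),
      IsChordal G ∧ treewidth G = 2 ∧ HasMaxDegree G Δ ∧
      (2 / 3) * ((Δ : ℝ) - 1) ≤ (tpw G : ℝ) := by
  classical
  obtain ⟨d, hd⟩ := hodd
  have hd5 : 5 ≤ d := by omega
  set m : ℕ := (4*d + 2) / 3 with hm
  set β : ℕ := m - 1 with hβ
  set cS : ℕ := β / 2 with hcS
  set cB : ℕ := 2*d - 1 - cS with hcB
  set h : ℕ := β + 3 with hh
  have f1 : β ≤ cB := by omega
  have f2 : β ≤ 2*cS + 1 := by omega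
  have f3 : cB + cS + 2 = Δ := by omega
  have f4 : 1 ≤ cB := by omega
  have f5 : 1 ≤ cS := by omega
  have f6 : 3 ≤ h := by omega
  have f7 : 4*d ≤ 3*m := by omega
  have f8 : m = β + 1 := by omega
  haveI hfin : Finite (Stmt9Aux.V cB cS h) := Stmt9Aux.finiteV
  refine ⟨Stmt9Aux.V cB cS h, Fintype.ofFinite _, Stmt9Aux.Gr cB cS h, ?_, ?_, ?_, ?_⟩
  · exact Stmt9Aux.chordalG
  · exact Stmt9Aux.tw_two f4 f5 f6
  · rw [← f3]
    exact Stmt9Aux.hasMaxDegreeG f4 f5 f6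
  · have hb : m ≤ tpw (Stmt9Aux.Gr cB cS h) := by
      rw [f8]
      exact Stmt9Aux.tpw_ge f1 f2 (by omega)
    have h1 : ((Δ:ℝ) - 1) = 2*(d:ℝ) := by
      rw [hd]
      push_cast
      ring
    rw [h1]
    have h2 : (m:ℝ) ≤ (tpw (Stmt9Aux.Gr cB cS h) : ℝ) := Nat.cast_le.mpr hb
    have h3 : (4*(d:ℝ)) ≤ 3*(m:ℝ) := by exact_mod_cast f7
    linarith
end

section
/- For every graph G, the domino tree-width satisfies dtw(G) ≥ tpw(G) − 1. -/
open SimpleGraph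

/-- `(T, B)` is a tree decomposition of `G`: the pattern `T` is a tree, every edge of
`G` lies in some bag, and the bags containing any fixed vertex form a nonempty subtree. -/
def IsTreeDecomp {V ι : Type} (G : SimpleGraph V) (T : SimpleGraph ι) (B : ι → Set V) : Prop :=
  T.Connected ∧ T.IsAcyclic ∧
  (∀ u v, G.Adj u v → ∃ i, u ∈ B i ∧ v ∈ B i) ∧
  (∀ v, (T.induce {i | v ∈ B i}).Connected)

/-- The domino tree-width of `G`: the minimum width of a tree decomposition in which
every vertex lies in at most two bags. -/
noncomputable def dtw {V : Type} (G : SimpleGraph V) : ℕ :=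
  sInf {w | ∃ (ι : Type) (T : SimpleGraph ι) (B : ι → Set V),
    IsTreeDecomp G T B ∧
    (∀ v i j l, v ∈ B i → v ∈ B j → v ∈ B l → i = j ∨ i = l ∨ j = l) ∧
    ∀ i, (B i).ncard ≤ w + 1}

private lemma isPath_concat' {ι : Type} {T : SimpleGraph ι} {u v w : ι} {p : T.Walk u v}
    (hp : p.IsPath) (h : T.Adj v w) (hw : w ∉ p.support) : (p.concat h).IsPath := by
  rw [← Walk.isPath_reverse_iff, Walk.reverse_concat]
  exact hp.reverse.cons (by simpa [Walk.support_reverse] using hw)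

private lemma tree_dist_ne {ι : Type} {T : SimpleGraph ι} (hc : T.Connected)
    (ha : T.IsAcyclic) (r a c : ι) (hac : T.Adj a c) : T.dist r a ≠ T.dist r c := by
  classical
  intro heq
  have hupq := isAcyclic_iff_path_unique.mp ha
  obtain ⟨p, hp, hpl⟩ := (hc r a).exists_path_of_dist
  obtain ⟨q, hq, hql⟩ := (hc r c).exists_path_of_dist
  by_cases hcs : c ∈ p.support
  · have h1 : (p.takeUntil c hcs).IsPath := hp.takeUntil hcs
    have h2 : (p.takeUntil c hcs).length = q.length :=
      congrArg (fun x => x.val.length) (hupq ⟨_, h1⟩ ⟨q, hq⟩)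
    have h4 := congrArg Walk.length (p.take_spec hcs)
    rw [Walk.length_append] at h4
    have h5 : (p.dropUntil c hcs).length = 0 := by omega
    exact hac.ne (Walk.eq_of_length_eq_zero h5).symm
  · have h1 : (p.concat hac).IsPath := isPath_concat' hp hac hcs
    have h3 : (p.concat hac).length = q.length :=
      congrArg (fun x => x.val.length) (hupq ⟨_, h1⟩ ⟨q, hq⟩)
    rw [Walk.length_concat] at h3
    omega

private lemma tree_parent {ι : Type} {T : SimpleGraph ι} (hc : T.Connected) (ha : T.IsAcyclic)
    (r a b c : ι) (hac : T.Adj a c) (hbc : T.Adj b c)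
    (h1 : T.dist r a ≤ T.dist r c) (h2 : T.dist r b ≤ T.dist r c) : a = b := by
  classical
  have hupq := isAcyclic_iff_path_unique.mp ha
  have h1' : T.dist r a < T.dist r c := lt_of_le_of_ne h1 (tree_dist_ne hc ha r a c hac)
  have h2' : T.dist r b < T.dist r c := lt_of_le_of_ne h2 (tree_dist_ne hc ha r b c hbc)
  obtain ⟨p, hp, hpl⟩ := (hc r a).exists_path_of_dist
  obtain ⟨q, hq, hql⟩ := (hc r b).exists_path_of_dist
  have hcp : c ∉ p.support := by
    intro hcs
    have hle := SimpleGraph.dist_le (p.takeUntil c hcs)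
    have := Walk.length_takeUntil_le p hcs
    omega
  have hcq : c ∉ q.support := by
    intro hcs
    have hle := SimpleGraph.dist_le (q.takeUntil c hcs)
    have := Walk.length_takeUntil_le q hcs
    omega
  have hPa : (p.concat hac).IsPath := isPath_concat' hp hac hcp
  have hPb : (q.concat hbc).IsPath := isPath_concat' hq hbc hcq
  have heqw : p.concat hac = q.concat hbc :=
    congrArg Subtype.val (hupq ⟨_, hPa⟩ ⟨_, hPb⟩)
  have hrev : Walk.cons hac.symm p.reverse = Walk.cons hbc.symm q.reverse := by
    rw [← Walk.reverse_concat p hac, ← Walk.reverse_concat q hbc, heqw]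
  have hsupp := congrArg Walk.support hrev
  rw [Walk.support_cons, Walk.support_cons] at hsupp
  have hts : p.reverse.support = q.reverse.support := by
    injection hsupp
  rw [Walk.support_eq_cons p.reverse, Walk.support_eq_cons q.reverse] at hts
  injection hts with h _

/-- For every graph, `dtw(G) ≥ tpw(G) - 1`. -/
theorem stmt14 {V : Type} [Fintype V] (G : SimpleGraph V) :
    tpw G ≤ dtw G + 1 := by
  classical
  have hne : {w | ∃ (ι : Type) (T : SimpleGraph ι) (B : ι → Set V),
      IsTreeDecomp G T B ∧
      (∀ v i j l, v ∈ B i → v ∈ B j → v ∈ B l → i = j ∨ i = l ∨ j = l) ∧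
      ∀ i, (B i).ncard ≤ w + 1}.Nonempty := by
    refine ⟨Fintype.card V, Unit, ⊥, fun _ => Set.univ, ⟨?_, ?_, ?_, ?_⟩, ?_, ?_⟩
    · exact ⟨fun a b => by cases a; cases b; exact Reachable.refl _⟩
    · intro v c hcyc
      cases c with
      | nil => exact hcyc.ne_nil rfl
      | cons h p => exact h.elim
    · exact fun u v _ => ⟨(), trivial, trivial⟩
    · intro v
      haveI : Nonempty ↑{i | v ∈ (fun _ => (Set.univ : Set V)) i} := ⟨⟨(), trivial⟩⟩
      exact ⟨fun a b => (Subsingleton.elim a b) ▸ Reachable.refl _⟩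
    · intro v i j l _ _ _
      exact Or.inl (Subsingleton.elim i j)
    · intro i
      simp [Set.ncard_univ, Nat.card_eq_fintype_card]
  have hmem : dtw G ∈ {w | ∃ (ι : Type) (T : SimpleGraph ι) (B : ι → Set V),
      IsTreeDecomp G T B ∧
      (∀ v i j l, v ∈ B i → v ∈ B j → v ∈ B l → i = j ∨ i = l ∨ j = l) ∧
      ∀ i, (B i).ncard ≤ w + 1} := Nat.sInf_mem hne
  obtain ⟨ι, T, B, ⟨hTc, hTa, hedge, hsubt⟩, hdom, hsize⟩ := hmem
  obtain ⟨r⟩ := hTc.nonempty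
  have hvB : ∀ v : V, ∃ i, v ∈ B i := by
    intro v
    obtain ⟨⟨i, hi⟩⟩ := (hsubt v).nonempty
    exact ⟨i, hi⟩
  have hkey : ∀ v : V, ∃ i, v ∈ B i ∧ ∀ j, v ∈ B j → T.dist r i ≤ T.dist r j := by
    intro v
    obtain ⟨i0, hi0⟩ := hvB v
    have hne' : ((fun i => T.dist r i) '' {i | v ∈ B i}).Nonempty := ⟨_, ⟨i0, hi0, rfl⟩⟩
    obtain ⟨i, hi, hdi⟩ := Nat.sInf_mem hne'
    exact ⟨i, hi, fun j hj => le_of_eq_of_le hdi (Nat.sInf_le ⟨j, hj, rfl⟩)⟩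
  choose f hfB hfmin using hkey
  have hadj : ∀ (v : V) (i j : ι), v ∈ B i → v ∈ B j → i ≠ j → T.Adj i j := by
    intro v i j hi hj hij
    have hr : (T.induce {k | v ∈ B k}).Reachable ⟨i, hi⟩ ⟨j, hj⟩ :=
      (hsubt v).preconnected _ _
    obtain ⟨w⟩ := hr
    have hnn : ¬ w.Nil := by
      intro h
      exact hij (congrArg Subtype.val h.eq)
    have h1 := w.adj_snd hnn
    have h2 : T.Adj i (w.getVert 1).val := h1
    have hxB : v ∈ B (w.getVert 1).val := (w.getVert 1).2
    rcases hdom v (w.getVert 1).val i j hxB hi hj with h | h | h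
    · exact absurd h.symm h2.ne
    · exact h ▸ h2
    · exact absurd h hij
  have hmain : ∀ u v : V, G.Adj u v → f u ≠ f v → T.Adj (f u) (f v) := by
    intro u v huv hne'
    obtain ⟨c, hu, hv⟩ := hedge u v huv
    by_cases hca : c = f u
    · have hvc : f v ≠ c := by rw [hca]; exact fun h => hne' h.symm
      have := hadj v (f v) c (hfB v) hv hvc
      rw [hca] at this
      exact this.symm
    · by_cases hcb : c = f v
      · have huc : f u ≠ c := by rw [hcb]; exact hne'
        have := hadj u (f u) c (hfB u) hu huc
        rw [hcb] at this
        exact this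
      · have h1 : T.Adj (f u) c := hadj u (f u) c (hfB u) hu (fun h => hca h.symm)
        have h2 : T.Adj (f v) c := hadj v (f v) c (hfB v) hv (fun h => hcb h.symm)
        exact absurd (tree_parent hTc hTa r (f u) (f v) c h1 h2
          (hfmin u c hu) (hfmin v c hv)) hne'
  apply Nat.sInf_le
  refine ⟨{i // i ∈ Set.range f}, fun v => ⟨f v, v, rfl⟩, ⟨?_, ?_⟩, ?_⟩
  · rintro ⟨i, v, rfl⟩
    exact ⟨v, rfl⟩
  · intro a c hc
    let φ : quotientGraph G (fun v => (⟨f v, v, rfl⟩ : {i // i ∈ Set.range f})) →g T :=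
      { toFun := Subtype.val
        map_rel' := by
          rintro a b ⟨hab, u, v, huv, hu, hv⟩
          have hau : a.val = f u := (congrArg Subtype.val hu).symm
          have hbv : b.val = f v := (congrArg Subtype.val hv).symm
          rw [hau, hbv]
          refine hmain u v huv (fun h => hab ?_)
          rw [← hu, ← hv]
          exact Subtype.ext h }
    have hinj : Function.Injective φ := fun x y h => Subtype.ext h
    exact hTa (c.map φ) (hc.map hinj)
  · rintro ⟨i, hi⟩
    have hsub2 : (fun v => (⟨f v, v, rfl⟩ : {i // i ∈ Set.range f})) ⁻¹' {⟨i, hi⟩} ⊆ B i := by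
      intro v hv
      have : f v = i := congrArg Subtype.val hv
      exact this ▸ hfB v
    exact le_trans (Set.ncard_le_ncard hsub2 (Set.toFinite _)) (hsize i)
end

section
/- Every chordal graph G with maximum degree Δ(G) ≥ 2 satisfies tpw(G) ≤ tw(G)·(Δ(G) − 1). -/
open SimpleGraph

namespace Stmt15Aux


variable {V : Type}

/-- The restriction of `G` to edges inside `S`. -/
def gS (G : SimpleGraph V) (S : Set V) : SimpleGraph V where
  Adj a b := G.Adj a b ∧ a ∈ S ∧ b ∈ S
  symm := ⟨fun _ _ ⟨h, ha, hb⟩ => ⟨h.symm, hb, ha⟩⟩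
  loopless := ⟨fun a ⟨h, _, _⟩ => G.loopless.irrefl a h⟩

lemma gS_le (G : SimpleGraph V) (S : Set V) : gS G S ≤ G := fun _ _ h => h.1

lemma gS_mono (G : SimpleGraph V) {S T : Set V} (h : S ⊆ T) : gS G S ≤ gS G T :=
  fun _ _ ⟨ha, hs, ht⟩ => ⟨ha, h hs, h ht⟩

lemma walk_split {Γ : SimpleGraph V} {a b : V} (p : Γ.Walk a b) (i : ℕ) :
    ∃ (q : Γ.Walk a (p.getVert i)) (r : Γ.Walk (p.getVert i) b),
      q.length + r.length = p.length ∧ q.length = min i p.length := by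
  induction p generalizing i with
  | nil => exact ⟨Walk.nil, Walk.nil, by simp, by simp⟩
  | cons h p ih =>
    cases i with
    | zero => exact ⟨Walk.nil, Walk.cons h p, by show 0 + (p.length + 1) = p.length + 1; omega, by rfl⟩
    | succ i =>
      obtain ⟨q, r, h1, h2⟩ := ih i
      exact ⟨Walk.cons h q, r, by simp [Walk.length_cons]; omega,
        by simp [Walk.length_cons, h2, Nat.succ_min_succ]⟩

lemma support_get? {Γ : SimpleGraph V} {a b : V} (p : Γ.Walk a b) :
    ∀ i, i ≤ p.length → p.support[i]? = some (p.getVert i) := by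
  induction p with
  | nil =>
    intro i hi
    simp only [Walk.length_nil, Nat.le_zero] at hi
    subst hi; simp [Walk.support_nil]
  | cons h p ih =>
    intro i hi
    cases i with
    | zero => simp [Walk.support_cons]
    | succ i =>
      simp only [Walk.support_cons, List.getElem?_cons_succ, Walk.getVert_cons_succ]
      exact ih i (by simpa [Walk.length_cons] using hi)

/-- a geodesic "path function" package -/
lemma geo {Γ : SimpleGraph V} {a b : V} (h : Γ.Reachable a b) :
    ∃ (w : ℕ → V) (L : ℕ), L = Γ.dist a b ∧ w 0 = a ∧ w L = b ∧
      (∀ s, s ≤ L → Γ.dist a (w s) = s) ∧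
      (∀ s t, s ≤ L → t ≤ L → w s = w t → s = t) ∧
      (∀ s, s < L → Γ.Adj (w s) (w (s + 1))) ∧
      (∀ s t, s ≤ L → t ≤ L → Γ.Adj (w s) (w t) → t = s + 1 ∨ s = t + 1) ∧
      (∀ s, s ≤ L → 1 ≤ L → ∃ y, Γ.Adj (w s) y) := by
  obtain ⟨p, hp⟩ := h.exists_walk_length_eq_dist
  have hdist : ∀ s, s ≤ p.length → Γ.dist a (p.getVert s) = s := by
    intro s hs
    obtain ⟨q, r, h1, h2⟩ := walk_split p s
    have hq : Γ.dist a (p.getVert s) ≤ s := by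
      have := Γ.dist_le q
      omega
    have hr : Γ.dist (p.getVert s) b ≤ p.length - s := by
      have := Γ.dist_le r
      omega
    obtain ⟨q', hq'⟩ := q.reachable.exists_walk_length_eq_dist
    obtain ⟨r', hr'⟩ := r.reachable.exists_walk_length_eq_dist
    have htri := Γ.dist_le (q'.append r')
    rw [Walk.length_append, hq', hr'] at htri
    omega
  have hinj : ∀ s t, s ≤ p.length → t ≤ p.length → p.getVert s = p.getVert t → s = t := by
    intro s t hs ht heq
    have h1 := hdist s hs
    have h2 := hdist t ht
    rw [heq] at h1; omega
  have hreachg : ∀ s, s ≤ p.length → Γ.Reachable a (p.getVert s) := by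
    intro s hs
    obtain ⟨q, r, h1, h2⟩ := walk_split p s
    exact q.reachable
  have hstep : ∀ s t, s ≤ p.length → t ≤ p.length → Γ.Adj (p.getVert s) (p.getVert t) →
      Γ.dist a (p.getVert t) ≤ Γ.dist a (p.getVert s) + 1 := by
    intro s t hs ht hadj
    obtain ⟨q', hq'⟩ := (hreachg s hs).exists_walk_length_eq_dist
    have := Γ.dist_le (q'.append (Walk.cons hadj Walk.nil))
    rw [Walk.length_append, hq'] at this
    simpa using this
  refine ⟨p.getVert, p.length, hp, p.getVert_zero, p.getVert_length, hdist, hinj, ?_, ?_, ?_⟩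
  · intro s hs; exact p.adj_getVert_succ hs
  · intro s t hs ht hadj
    have h1 := hstep s t hs ht hadj
    have h2 := hstep t s ht hs hadj.symm
    have hne : s ≠ t := by
      intro hst; subst hst; exact hadj.ne rfl
    have d1 := hdist s hs
    have d2 := hdist t ht
    omega
  · intro s hs hL
    rcases Nat.lt_or_ge s p.length with h' | h'
    · exact ⟨_, p.adj_getVert_succ h'⟩
    · have hs' : s = p.length := le_antisymm hs h'
      refine ⟨p.getVert (p.length - 1), ?_⟩
      have := p.adj_getVert_succ (i := p.length - 1) (by omega)
      have he : p.length - 1 + 1 = p.length := by omega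
      rw [he] at this
      rw [hs']
      exact this.symm





lemma fin_sub_val {n : ℕ} (hn : 4 ≤ n) (i j : Fin n) :
    ((j - i).val = 1) ↔ (j.val = i.val + 1 ∨ (j.val = 0 ∧ i.val = n - 1)) := by
  have hi := i.isLt
  have hj := j.isLt
  rw [Fin.sub_def]
  simp only
  rcases Nat.lt_or_ge (n - i.val + j.val) n with h | h
  · rw [Nat.mod_eq_of_lt h]; omega
  · have h2 : n - i.val + j.val - n < n := by omega
    rw [Nat.mod_eq_sub_mod h, Nat.mod_eq_of_lt h2]
    omega

lemma no_cycle {G : SimpleGraph V} (hc : ∀ n, 4 ≤ n → IsEmpty (cycleGraph n ↪g G))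
    {n : ℕ} (hn : 4 ≤ n) (c : ℕ → V)
    (hinj : ∀ s t, s < n → t < n → c s = c t → s = t)
    (hadj : ∀ s, s + 1 < n → G.Adj (c s) (c (s + 1)))
    (hwrap : G.Adj (c (n - 1)) (c 0))
    (hchord : ∀ s t, s < n → t < n → G.Adj (c s) (c t) →
      t = s + 1 ∨ s = t + 1 ∨ (s = 0 ∧ t = n - 1) ∨ (t = 0 ∧ s = n - 1)) : False := by
  have hcyc : ∀ (i j : Fin n), (cycleGraph n).Adj i j ↔
      (j.val = i.val + 1 ∨ (j.val = 0 ∧ i.val = n - 1)) ∨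
      (i.val = j.val + 1 ∨ (i.val = 0 ∧ j.val = n - 1)) := by
    intro i j
    rw [cycleGraph_adj']
    rw [fin_sub_val hn j i, fin_sub_val hn i j]
    tauto
  refine (hc n hn).false ⟨⟨fun i => c i.val, ?_⟩, ?_⟩
  · intro i j hij
    exact Fin.ext (hinj _ _ i.isLt j.isLt hij)
  · intro i j
    show G.Adj (c i.val) (c j.val) ↔ _
    rw [hcyc i j]
    constructor
    · intro hadj'
      have := hchord i.val j.val i.isLt j.isLt hadj'
      omega
    · intro hrel
      have hi := i.isLt
      have hj := j.isLt
      rcases hrel with (h | h) | (h | h)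
      · have : j.val = i.val + 1 := h
        rw [this]; exact hadj i.val (by omega)
      · obtain ⟨h1, h2⟩ := h
        rw [h1, h2]; exact hwrap
      · have : i.val = j.val + 1 := h
        rw [this]; exact (hadj j.val (by omega)).symm
      · obtain ⟨h1, h2⟩ := h
        rw [h1, h2]; exact hwrap.symm




lemma glue {G : SimpleGraph V} (hc : ∀ n, 4 ≤ n → IsEmpty (cycleGraph n ↪g G))
    {w₁ w₂ : ℕ → V} {L₁ L₂ : ℕ}
    (hL₁ : 1 ≤ L₁) (hL₂ : 1 ≤ L₂) (hn : 4 ≤ L₁ + L₂)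
    (he1 : w₂ L₂ = w₁ 0) (he2 : w₁ L₁ = w₂ 0)
    (hinj₁ : ∀ s t, s ≤ L₁ → t ≤ L₁ → w₁ s = w₁ t → s = t)
    (hinj₂ : ∀ s t, s ≤ L₂ → t ≤ L₂ → w₂ s = w₂ t → s = t)
    (hadj₁ : ∀ s, s < L₁ → G.Adj (w₁ s) (w₁ (s + 1)))
    (hadj₂ : ∀ s, s < L₂ → G.Adj (w₂ s) (w₂ (s + 1)))
    (hchord₁ : ∀ s t, s ≤ L₁ → t ≤ L₁ → G.Adj (w₁ s) (w₁ t) →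
      t = s + 1 ∨ s = t + 1 ∨ (L₂ = 1 ∧ ((s = 0 ∧ t = L₁) ∨ (t = 0 ∧ s = L₁))))
    (hchord₂ : ∀ s t, s ≤ L₂ → t ≤ L₂ → G.Adj (w₂ s) (w₂ t) →
      t = s + 1 ∨ s = t + 1 ∨ (L₁ = 1 ∧ ((s = 0 ∧ t = L₂) ∨ (t = 0 ∧ s = L₂))))
    (hx : ∀ s t, 1 ≤ s → s < L₁ → 1 ≤ t → t < L₂ →
      w₁ s ≠ w₂ t ∧ ¬ G.Adj (w₁ s) (w₂ t)) : False := by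
  set n := L₁ + L₂ with hndef
  set c : ℕ → V := fun t => if t < L₁ then w₁ t else w₂ (t - L₁) with hcdef
  have hc1 : ∀ t, t < L₁ → c t = w₁ t := by intro t ht; simp [hcdef, ht]
  have hc2 : ∀ t, L₁ ≤ t → c t = w₂ (t - L₁) := by
    intro t ht; simp [hcdef, Nat.not_lt.mpr ht]
  have key_ne : ∀ s j, s < L₁ → j < L₂ → w₁ s = w₂ j → False := by
    intro s j hs hj heq
    rcases Nat.eq_zero_or_pos s with rfl | hs1
    · rw [← he1] at heq
      have := hinj₂ L₂ j (le_refl _) (by omega) heq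
      omega
    rcases Nat.eq_zero_or_pos j with rfl | hj1
    · rw [← he2] at heq
      have := hinj₁ s L₁ (by omega) (le_refl _) heq
      omega
    exact (hx s j hs1 hs hj1 hj).1 heq
  have claimC : ∀ s t, s < L₁ → L₁ ≤ t → t < n → G.Adj (w₁ s) (w₂ (t - L₁)) →
      t = s + 1 ∨ s = t + 1 ∨ (s = 0 ∧ t = n - 1) ∨ (t = 0 ∧ s = n - 1) := by
    intro s t hs ht htn hadj
    have hj : t - L₁ < L₂ := by omega
    rcases Nat.eq_zero_or_pos s with rfl | hs1
    · rcases Nat.eq_zero_or_pos (t - L₁) with hj0 | hj1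
      · rw [hj0, ← he2] at hadj
        rcases hchord₁ 0 L₁ (by omega) (le_refl _) hadj with h | h | ⟨h1, h2⟩
        · omega
        · omega
        · omega
      · rw [← he1] at hadj
        rcases hchord₂ L₂ (t - L₁) (le_refl _) (by omega) hadj with h | h | ⟨h1, h2⟩
        · omega
        · omega
        · omega
    · rcases Nat.eq_zero_or_pos (t - L₁) with hj0 | hj1
      · rw [hj0, ← he2] at hadj
        rcases hchord₁ s L₁ (by omega) (le_refl _) hadj with h | h | ⟨h1, h2⟩
        · omega
        · omega
        · omega
      · exact absurd hadj (hx s (t - L₁) hs1 hs hj1 hj).2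
  refine no_cycle hc hn c ?_ ?_ ?_ ?_
  · -- injectivity
    intro s t hs ht heq
    rcases Nat.lt_or_ge s L₁ with h1 | h1 <;> rcases Nat.lt_or_ge t L₁ with h2 | h2
    · rw [hc1 s h1, hc1 t h2] at heq
      exact hinj₁ s t (by omega) (by omega) heq
    · rw [hc1 s h1, hc2 t h2] at heq
      exact absurd heq (fun heq => key_ne s (t - L₁) h1 (by omega) heq)
    · rw [hc2 s h1, hc1 t h2] at heq
      exact absurd heq.symm (fun heq => key_ne t (s - L₁) h2 (by omega) heq)
    · rw [hc2 s h1, hc2 t h2] at heq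
      have := hinj₂ (s - L₁) (t - L₁) (by omega) (by omega) heq
      omega
  · -- consecutive adjacency
    intro s hs
    rcases Nat.lt_or_ge (s + 1) L₁ with h1 | h1
    · rw [hc1 s (by omega), hc1 (s + 1) h1]
      exact hadj₁ s (by omega)
    rcases Nat.lt_or_ge s L₁ with h2 | h2
    · -- s + 1 = L₁
      have hseq : s + 1 = L₁ := by omega
      rw [hc1 s h2, hc2 (s + 1) (by omega)]
      have : s + 1 - L₁ = 0 := by omega
      rw [this, ← he2, ← hseq]
      exact hadj₁ s (by omega)
    · rw [hc2 s h2, hc2 (s + 1) (by omega)]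
      have : s + 1 - L₁ = (s - L₁) + 1 := by omega
      rw [this]
      exact hadj₂ (s - L₁) (by omega)
  · -- wrap
    have h1 : L₁ ≤ n - 1 := by omega
    rw [hc2 (n - 1) h1, hc1 0 (by omega)]
    have h2 : n - 1 - L₁ = L₂ - 1 := by omega
    rw [h2, ← he1]
    have h3 : L₂ - 1 + 1 = L₂ := by omega
    conv_rhs => rw [← h3]
    exact hadj₂ (L₂ - 1) (by omega)
  · -- chords
    intro s t hs ht hadj
    rcases Nat.lt_or_ge s L₁ with h1 | h1 <;> rcases Nat.lt_or_ge t L₁ with h2 | h2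
    · rw [hc1 s h1, hc1 t h2] at hadj
      rcases hchord₁ s t (by omega) (by omega) hadj with h | h | ⟨ha, hb⟩
      · omega
      · omega
      · omega
    · rw [hc1 s h1, hc2 t h2] at hadj
      have := claimC s t h1 h2 ht hadj
      omega
    · rw [hc2 s h1, hc1 t h2] at hadj
      have := claimC t s h2 h1 hs hadj.symm
      omega
    · rw [hc2 s h1, hc2 t h2] at hadj
      rcases hchord₂ (s - L₁) (t - L₁) (by omega) (by omega) hadj with h | h | ⟨ha, hb⟩
      · omega
      · omega
      · omega




noncomputable def root (G : SimpleGraph V) (v : V) : V :=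
  Quot.out (G.connectedComponentMk v)

lemma reachable_root (G : SimpleGraph V) (v : V) : G.Reachable (root G v) v :=
  ConnectedComponent.eq.mp (Quot.out_eq (G.connectedComponentMk v))

lemma root_eq_of_reachable {G : SimpleGraph V} {u v : V} (h : G.Reachable u v) :
    root G u = root G v := by
  unfold root
  rw [ConnectedComponent.sound h]

noncomputable def lvl (G : SimpleGraph V) (v : V) : ℕ := G.dist (root G v) v

lemma lvl_adj {G : SimpleGraph V} {u v : V} (h : G.Adj u v) :
    lvl G v ≤ lvl G u + 1 := by
  have hr : root G u = root G v := root_eq_of_reachable h.reachable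
  unfold lvl
  rw [← hr]
  obtain ⟨p, hp⟩ := (reachable_root G u).exists_walk_length_eq_dist
  have := G.dist_le (p.append (Walk.cons h Walk.nil))
  rw [Walk.length_append, hp] at this
  simpa using this

lemma lvl_zero_iff {G : SimpleGraph V} {v : V} : lvl G v = 0 ↔ v = root G v := by
  unfold lvl
  rw [(reachable_root G v).dist_eq_zero_iff]
  exact eq_comm

lemma not_adj_of_lvl_gap {G : SimpleGraph V} {u v : V} (h : lvl G u + 2 ≤ lvl G v) :
    ¬ G.Adj u v := fun hadj => by have := lvl_adj hadj; omega

lemma lvl_parent {G : SimpleGraph V} {v : V} (h : 1 ≤ lvl G v) :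
    ∃ u, G.Adj u v ∧ lvl G u + 1 = lvl G v := by
  obtain ⟨p, hp⟩ := (reachable_root G v).exists_walk_length_eq_dist
  have hlen : p.length = lvl G v := hp
  set m := lvl G v with hm
  have hgv : p.getVert m = v := by rw [← hlen]; exact p.getVert_length
  have hadj : G.Adj (p.getVert (m - 1)) v := by
    have := p.adj_getVert_succ (i := m - 1) (by omega)
    have he : m - 1 + 1 = m := by omega
    rw [he, hgv] at this
    exact this
  refine ⟨p.getVert (m - 1), hadj, ?_⟩
  · -- lvl of penultimate vertex
    obtain ⟨q, r, h1, h2⟩ := walk_split p (m - 1)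
    have hd1 : G.dist (root G v) (p.getVert (m - 1)) ≤ m - 1 := by
      have := G.dist_le q; omega
    have hroot : root G (p.getVert (m - 1)) = root G v :=
      root_eq_of_reachable hadj.reachable
    have hd2 : m ≤ G.dist (root G v) (p.getVert (m - 1)) + 1 := by
      have h3 := lvl_adj hadj
      unfold lvl at h3
      rw [hroot] at h3
      omega
    unfold lvl
    rw [hroot]
    omega

/-- descend from a vertex to its root through strictly lower levels -/
lemma desc {G : SimpleGraph V} :
    ∀ n (z : V), lvl G z = n → 1 ≤ n →
      (gS G ({x | lvl G x + 1 ≤ n} ∪ {z})).Reachable z (root G z) := by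
  intro n
  induction n using Nat.strong_induction_on with
  | _ n ih =>
    intro z hz hn
    obtain ⟨u, hu, hul⟩ := lvl_parent (G := G) (v := z) (by omega)
    have hadj : (gS G ({x | lvl G x + 1 ≤ n} ∪ {z})).Adj z u :=
      ⟨hu.symm, Or.inr rfl, Or.inl (by simp only [Set.mem_setOf_eq]; omega)⟩
    have hroot : root G u = root G z := root_eq_of_reachable hu.reachable
    rcases Nat.eq_zero_or_pos (lvl G u) with h0 | h1
    · have : u = root G u := lvl_zero_iff.mp h0
      rw [← hroot, ← this]
      exact hadj.reachable
    · have hr := ih (lvl G u) (by omega) u rfl h1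
      have hmono : (gS G ({x | lvl G x + 1 ≤ lvl G u} ∪ {u})) ≤
          (gS G ({x | lvl G x + 1 ≤ n} ∪ {z})) := by
        apply gS_mono
        intro x hx
        rcases hx with hx | hx
        · left; simp only [Set.mem_setOf_eq] at hx ⊢; omega
        · left; simp only [Set.mem_singleton_iff] at hx; subst hx
          simp only [Set.mem_setOf_eq]; omega
      rw [← hroot]
      exact hadj.reachable.trans (hr.mono hmono)

/-- vertices of a walk in a restricted graph lie in the restriction set -/
lemma gS_walk_mem {G : SimpleGraph V} {S : Set V} {a b : V} (p : (gS G S).Walk a b)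
    (hl : 1 ≤ p.length) (i : ℕ) : p.getVert i ∈ S := by
  induction p generalizing i with
  | nil => simp at hl
  | cons h q ih =>
    rcases i with _ | i
    · exact h.2.1
    · rw [Walk.getVert_cons_succ]
      rcases Nat.eq_zero_or_pos q.length with h0 | h1
      · have hxb := q.eq_of_length_eq_zero h0
        rw [q.getVert_of_length_le (by omega), ← hxb]
        exact h.2.2
      · exact ih h1 i




lemma ne_of_lvl_ne {G : SimpleGraph V} {u v : V} (h : lvl G u ≠ lvl G v) : u ≠ v :=
  fun he => h (he ▸ rfl)

lemma common_nbr {G : SimpleGraph V} (hc : ∀ n, 4 ≤ n → IsEmpty (cycleGraph n ↪g G)) :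
    ∀ (m : ℕ) (K : Finset V) (ℓ : ℕ), K.card = m → 1 ≤ m → 1 ≤ ℓ →
    (∀ p ∈ K, lvl G p = ℓ) → (∀ p ∈ K, ∀ q ∈ K, p ≠ q → G.Adj p q) →
    ∃ x, lvl G x + 1 = ℓ ∧ ∀ p ∈ K, G.Adj x p := by
  classical
  intro m
  induction m using Nat.strong_induction_on with
  | _ m ih =>
  intro K ℓ hcard hm hℓ hlvl hclK
  rcases Nat.eq_or_lt_of_le hm with h1 | h2
  · -- m = 1
    obtain ⟨p, hp⟩ := Finset.card_eq_one.mp (hcard.trans h1.symm)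
    subst hp
    obtain ⟨u, hu, hul⟩ := lvl_parent (G := G) (v := p)
      (by rw [hlvl p (Finset.mem_singleton_self p)]; omega)
    exact ⟨u, by rw [hul, hlvl p (Finset.mem_singleton_self p)], by
      intro q hq
      rw [Finset.mem_singleton] at hq
      subst hq; exact hu⟩
  · -- m ≥ 2
    obtain ⟨p₁, hp₁, p₂, hp₂, hp12ne⟩ := Finset.one_lt_card.mp (by omega : 1 < K.card)
    have hK1 : (K.erase p₁).card = m - 1 := by rw [Finset.card_erase_of_mem hp₁, hcard]
    have hK2 : (K.erase p₂).card = m - 1 := by rw [Finset.card_erase_of_mem hp₂, hcard]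
    obtain ⟨x, hxl, hxK⟩ := ih (m - 1) (by omega) (K.erase p₁) ℓ hK1 (by omega) hℓ
      (fun p hp => hlvl p (Finset.mem_of_mem_erase hp))
      (fun p hp q hq => hclK p (Finset.mem_of_mem_erase hp) q (Finset.mem_of_mem_erase hq))
    obtain ⟨y, hyl, hyK⟩ := ih (m - 1) (by omega) (K.erase p₂) ℓ hK2 (by omega) hℓ
      (fun p hp => hlvl p (Finset.mem_of_mem_erase hp))
      (fun p hp q hq => hclK p (Finset.mem_of_mem_erase hp) q (Finset.mem_of_mem_erase hq))
    by_contra hno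
    push_neg at hno
    have hxp₁ : ¬ G.Adj x p₁ := by
      intro hadj
      obtain ⟨p, hp, hnadj⟩ := hno x hxl
      rcases eq_or_ne p p₁ with rfl | hne
      · exact hnadj hadj
      · exact hnadj (hxK p (Finset.mem_erase.mpr ⟨hne, hp⟩))
    have hyp₂ : ¬ G.Adj y p₂ := by
      intro hadj
      obtain ⟨p, hp, hnadj⟩ := hno y hyl
      rcases eq_or_ne p p₂ with rfl | hne
      · exact hnadj hadj
      · exact hnadj (hyK p (Finset.mem_erase.mpr ⟨hne, hp⟩))
    have hxp₂ : G.Adj x p₂ := hxK p₂ (Finset.mem_erase.mpr ⟨hp12ne.symm, hp₂⟩)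
    have hyp₁ : G.Adj y p₁ := hyK p₁ (Finset.mem_erase.mpr ⟨hp12ne, hp₁⟩)
    have hp12 : G.Adj p₁ p₂ := hclK p₁ hp₁ p₂ hp₂ hp12ne
    have hxy : x ≠ y := fun heq => hyp₂ (heq ▸ hxp₂)
    have hl1 : lvl G p₁ = ℓ := hlvl p₁ hp₁
    have hl2 : lvl G p₂ = ℓ := hlvl p₂ hp₂
    -- the explicit three-edge path x - p₂ - p₁ - y
    set w₁ : ℕ → V := fun t => if t = 0 then x else if t = 1 then p₂ else if t = 2 then p₁ else y
      with hw₁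
    have e0 : w₁ 0 = x := rfl
    have e1 : w₁ 1 = p₂ := rfl
    have e2 : w₁ 2 = p₁ := rfl
    have e3 : w₁ 3 = y := rfl
    have hnexp₂ : x ≠ p₂ := ne_of_lvl_ne (G := G) (by omega)
    have hnexp₁ : x ≠ p₁ := ne_of_lvl_ne (G := G) (by omega)
    have hneyp₂ : y ≠ p₂ := ne_of_lvl_ne (G := G) (by omega)
    have hneyp₁ : y ≠ p₁ := ne_of_lvl_ne (G := G) (by omega)
    have hinj₁ : ∀ s t, s ≤ 3 → t ≤ 3 → w₁ s = w₁ t → s = t := by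
      intro s t hs ht heq
      interval_cases s <;> interval_cases t <;>
        simp only [e0, e1, e2, e3] at heq <;>
        first
          | rfl
          | exact absurd heq hnexp₂ | exact absurd heq.symm hnexp₂
          | exact absurd heq hnexp₁ | exact absurd heq.symm hnexp₁
          | exact absurd heq hneyp₂ | exact absurd heq.symm hneyp₂
          | exact absurd heq hneyp₁ | exact absurd heq.symm hneyp₁
          | exact absurd heq hxy | exact absurd heq.symm hxy
          | exact absurd heq hp12ne | exact absurd heq.symm hp12ne
    have hadj₁ : ∀ s, s < 3 → G.Adj (w₁ s) (w₁ (s + 1)) := by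
      intro s hs
      interval_cases s
      · rw [e0]; exact hxp₂
      · rw [e1]; exact hp12.symm
      · rw [e2]; exact hyp₁.symm
    by_cases hxyadj : G.Adj x y
    · -- 4-cycle x p₂ p₁ y
      set w₂ : ℕ → V := fun t => if t = 0 then y else x with hw₂
      have f0 : w₂ 0 = y := rfl
      have f1 : w₂ 1 = x := rfl
      refine glue hc (w₁ := w₁) (w₂ := w₂) (L₁ := 3) (L₂ := 1) (by omega) (by omega) (by omega)
        f1 e3 hinj₁ ?_ hadj₁ ?_ ?_ ?_ ?_
      · intro s t hs ht heq
        interval_cases s <;> interval_cases t <;>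
          simp only [f0, f1] at heq <;>
          first
            | rfl
            | exact absurd heq hxy | exact absurd heq.symm hxy
      · intro s hs
        interval_cases s
        rw [f0, f1]; exact hxyadj.symm
      · intro s t hs ht hadj
        interval_cases s <;> interval_cases t <;>
          first
            | (exfalso; exact hadj.ne rfl)
            | omega
            | (exfalso; rw [e0, e2] at hadj; exact hxp₁ hadj)
            | (exfalso; rw [e2, e0] at hadj; exact hxp₁ hadj.symm)
            | (exfalso; rw [e1, e3] at hadj; exact hyp₂ hadj.symm)
            | (exfalso; rw [e3, e1] at hadj; exact hyp₂ hadj)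
      · intro s t hs ht hadj
        interval_cases s <;> interval_cases t <;>
          first
            | (exfalso; exact hadj.ne rfl)
            | omega
      · intro s t h1 h2 h3 h4
        omega
    · -- need the low path
      have hℓ2 : 2 ≤ ℓ := by
        by_contra hlt
        have hℓ1 : ℓ = 1 := by omega
        have hx0 : x = root G x := lvl_zero_iff.mp (by omega)
        have hy0 : y = root G y := lvl_zero_iff.mp (by omega)
        have hreach : G.Reachable x y :=
          (hxp₂.reachable.trans hp12.reachable.symm).trans hyp₁.symm.reachable
        have := root_eq_of_reachable hreach
        exact hxy (by rw [hx0, hy0, this])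
      set S₂ : Set V := {z | lvl G z + 2 ≤ ℓ} ∪ {y, x} with hS₂
      have hreachyx : (gS G S₂).Reachable y x := by
        have hry := desc (G := G) (lvl G y) y rfl (by omega)
        have hrx := desc (G := G) (lvl G x) x rfl (by omega)
        have hmy : (gS G ({z | lvl G z + 1 ≤ lvl G y} ∪ {y})) ≤ gS G S₂ := by
          apply gS_mono
          intro z hz
          rcases hz with hz | hz
          · left; simp only [Set.mem_setOf_eq] at hz ⊢; omega
          · right; simp only [Set.mem_singleton_iff] at hz; subst hz; left; rfl
        have hmx : (gS G ({z | lvl G z + 1 ≤ lvl G x} ∪ {x})) ≤ gS G S₂ := by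
          apply gS_mono
          intro z hz
          rcases hz with hz | hz
          · left; simp only [Set.mem_setOf_eq] at hz ⊢; omega
          · right; simp only [Set.mem_singleton_iff] at hz; subst hz; right; rfl
        have hroots : root G y = root G x := by
          have hreach : G.Reachable x y :=
            (hxp₂.reachable.trans hp12.reachable.symm).trans hyp₁.symm.reachable
          exact (root_eq_of_reachable hreach).symm
        exact ((hry.mono hmy).trans (by rw [hroots]; exact (hrx.mono hmx).symm))
      obtain ⟨w₂, L₂, hdist, f0, fL, _, hinj₂, hadj₂, hchord₂, hmem₂⟩ := geo hreachyx
      have hL₂2 : 2 ≤ L₂ := by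
        rcases Nat.lt_or_ge L₂ 2 with hlt | hge
        · exfalso
          interval_cases L₂
          · rw [← f0, ← fL] at hxy
            exact hxy rfl
          · have : (gS G S₂).Adj (w₂ 0) (w₂ 1) := hadj₂ 0 (by omega)
            rw [f0] at this
            have h1 : w₂ 1 = x := by rw [← fL]
            rw [h1] at this
            exact hxyadj this.1.symm
        · exact hge
      have hmemS : ∀ t, t ≤ L₂ → w₂ t ∈ S₂ := by
        intro t ht
        obtain ⟨z, hz⟩ := hmem₂ t ht (by omega)
        exact hz.2.1
      refine glue hc (w₁ := w₁) (w₂ := w₂) (L₁ := 3) (L₂ := L₂) (by omega) (by omega) (by omega)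
        (by rw [fL, e0]) (by rw [f0, e3]) hinj₁ hinj₂ hadj₁
        (fun s hs => (hadj₂ s hs).1) ?_ ?_ ?_
      · -- chords of w₁
        intro s t hs ht hadj
        interval_cases s <;> interval_cases t <;>
          first
            | (exfalso; exact hadj.ne rfl)
            | omega
            | (exfalso; rw [e0, e2] at hadj; exact hxp₁ hadj)
            | (exfalso; rw [e2, e0] at hadj; exact hxp₁ hadj.symm)
            | (exfalso; rw [e1, e3] at hadj; exact hyp₂ hadj.symm)
            | (exfalso; rw [e3, e1] at hadj; exact hyp₂ hadj)
            | (exfalso; rw [e0, e3] at hadj; exact hxyadj hadj)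
            | (exfalso; rw [e3, e0] at hadj; exact hxyadj hadj.symm)
      · -- chords of w₂
        intro s t hs ht hadj
        have h := hchord₂ s t hs ht ⟨hadj, hmemS s hs, hmemS t ht⟩
        tauto
      · -- cross
        intro s t hs1 hs3 ht1 htL
        have hzS : w₂ t ∈ S₂ := hmemS t (by omega)
        have hzy : w₂ t ≠ y := by
          intro heq
          rw [← f0] at heq
          have := hinj₂ t 0 (by omega) (by omega) heq
          omega
        have hzx : w₂ t ≠ x := by
          intro heq
          rw [← fL] at heq
          have := hinj₂ t L₂ (by omega) (by omega) heq
          omega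
        have hzlvl : lvl G (w₂ t) + 2 ≤ ℓ := by
          rcases hzS with hz | hz
          · exact hz
          · rcases hz with hz | hz
            · exact absurd hz hzy
            · exact absurd hz hzx
        have hws : lvl G (w₁ s) = ℓ := by
          interval_cases s
          · rw [e1]; exact hl2
          · rw [e2]; exact hl1
        constructor
        · exact fun heq => (ne_of_lvl_ne (G := G) (by omega : lvl G (w₁ s) ≠ lvl G (w₂ t))) heq
        · intro hadj
          exact not_adj_of_lvl_gap (by omega) hadj.symm




/-- the graph of levels `≥ m` -/
def GammaA (G : SimpleGraph V) (m : ℕ) : SimpleGraph V := gS G {y | m ≤ lvl G y}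

/-- the connected piece of the high part through `v₀` -/
def CC (G : SimpleGraph V) (v₀ : V) : Set V :=
  {x | lvl G v₀ ≤ lvl G x ∧ (GammaA G (lvl G v₀)).Reachable x v₀}

/-- the bag of `v₀` -/
def Bag (G : SimpleGraph V) (v₀ : V) : Set V :=
  {x | lvl G x = lvl G v₀ ∧ (GammaA G (lvl G v₀)).Reachable x v₀}

/-- the attachment set of the piece -/
def PP (G : SimpleGraph V) (v₀ : V) : Set V :=
  {p | lvl G p + 1 = lvl G v₀ ∧ ∃ c ∈ CC G v₀, G.Adj p c}

lemma Bag_subset_CC (G : SimpleGraph V) (v₀ : V) : Bag G v₀ ⊆ CC G v₀ :=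
  fun x ⟨h1, h2⟩ => ⟨le_of_eq h1.symm, h2⟩

lemma v₀_mem_Bag (G : SimpleGraph V) (v₀ : V) : v₀ ∈ Bag G v₀ := ⟨rfl, Reachable.refl v₀⟩

lemma CC_grow {G : SimpleGraph V} {v₀ x y : V} (hx : x ∈ CC G v₀) (hadj : G.Adj y x)
    (hy : lvl G v₀ ≤ lvl G y) : y ∈ CC G v₀ := by
  refine ⟨hy, ?_⟩
  have hedge : (GammaA G (lvl G v₀)).Adj y x := ⟨hadj, hy, hx.1⟩
  exact hedge.reachable.trans hx.2

lemma CC_to_PP {G : SimpleGraph V} {v₀ x y : V} (hx : x ∈ CC G v₀) (hadj : G.Adj y x)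
    (hy : lvl G y < lvl G v₀) : y ∈ PP G v₀ := by
  have h1 := lvl_adj hadj
  have h2 := hx.1
  exact ⟨by omega, x, hx, hadj⟩

lemma reach_in_CC_aux {G : SimpleGraph V} {m : ℕ} :
    ∀ (u w : V) (p : (gS G {y | m ≤ lvl G y}).Walk u w),
      (gS G {z | m ≤ lvl G z ∧ (gS G {y | m ≤ lvl G y}).Reachable z w}).Reachable u w := by
  intro u w p
  induction p with
  | nil => exact Reachable.refl _
  | @cons u z w h q ih =>
    have hedge : (gS G {z' | m ≤ lvl G z' ∧ (gS G {y | m ≤ lvl G y}).Reachable z' w}).Adj u z :=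
      ⟨h.1, ⟨h.2.1, ⟨Walk.cons h q⟩⟩, ⟨h.2.2, ⟨q⟩⟩⟩
    exact hedge.reachable.trans ih

lemma reach_in_CC {G : SimpleGraph V} {v₀ : V} :
    ∀ x ∈ CC G v₀, (gS G (CC G v₀)).Reachable x v₀ := by
  intro x hx
  obtain ⟨w⟩ := hx.2
  exact reach_in_CC_aux x v₀ w

lemma root_of_CC {G : SimpleGraph V} {v₀ x : V} (hx : x ∈ CC G v₀) :
    root G x = root G v₀ :=
  root_eq_of_reachable (hx.2.mono (gS_le G _))

lemma PP_nonempty {G : SimpleGraph V} {v₀ : V} (h : 1 ≤ lvl G v₀) :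
    ∃ p ∈ PP G v₀, G.Adj p v₀ := by
  obtain ⟨u, hu, hul⟩ := lvl_parent (G := G) h
  have hv₀ : v₀ ∈ CC G v₀ := ⟨le_refl _, Reachable.refl _⟩
  exact ⟨u, CC_to_PP hv₀ hu (by omega), hu⟩

lemma Bag_parent {G : SimpleGraph V} {v₀ : V} (h : 1 ≤ lvl G v₀) :
    ∀ b ∈ Bag G v₀, ∃ p ∈ PP G v₀, G.Adj p b := by
  intro b hb
  have hbl : lvl G b = lvl G v₀ := hb.1
  obtain ⟨u, hu, hul⟩ := lvl_parent (G := G) (v := b) (by omega)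
  exact ⟨u, CC_to_PP (Bag_subset_CC G v₀ hb) hu (by omega), hu⟩

lemma PP_single {G : SimpleGraph V} {v₀ : V} (h : lvl G v₀ = 1) :
    PP G v₀ ⊆ {root G v₀} := by
  intro p hp
  obtain ⟨hpl, c, hc, hadj⟩ := hp
  have hp0 : lvl G p = 0 := by omega
  have h1 : p = root G p := lvl_zero_iff.mp hp0
  have h2 : root G p = root G c := root_eq_of_reachable hadj.reachable
  have h3 : root G c = root G v₀ := root_of_CC hc
  simp only [Set.mem_singleton_iff]
  rw [h1, h2, h3]

/-- Lemma A : the attachment set is a clique -/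
lemma PP_clique {G : SimpleGraph V} (hc : ∀ n, 4 ≤ n → IsEmpty (cycleGraph n ↪g G))
    {v₀ : V} : ∀ p ∈ PP G v₀, ∀ q ∈ PP G v₀, p ≠ q → G.Adj p q := by
  intro p hp q hq hne
  by_contra hnadj
  set i := lvl G v₀ with hi
  obtain ⟨hpl, cp, hcp, hadjp⟩ := hp
  obtain ⟨hql, cq, hcq, hadjq⟩ := hq
  have hrootp : root G p = root G v₀ := by
    rw [root_eq_of_reachable hadjp.reachable]; exact root_of_CC hcp
  have hrootq : root G q = root G v₀ := by
    rw [root_eq_of_reachable hadjq.reachable]; exact root_of_CC hcq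
  have hi2 : 2 ≤ i := by
    rcases Nat.lt_or_ge i 2 with h | h
    · exfalso
      have hp0 : lvl G p = 0 := by omega
      have hq0 : lvl G q = 0 := by omega
      exact hne (by rw [lvl_zero_iff.mp hp0, lvl_zero_iff.mp hq0, hrootp, hrootq])
    · exact h
  -- the high path
  set S₁ : Set V := CC G v₀ ∪ {p, q} with hS₁
  have hreach₁ : (gS G S₁).Reachable p q := by
    have hmono : gS G (CC G v₀) ≤ gS G S₁ := gS_mono G Set.subset_union_left
    have h1 : (gS G S₁).Adj p cp :=
      ⟨hadjp, Or.inr (Or.inl rfl), Or.inl hcp⟩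
    have h2 : (gS G S₁).Adj q cq :=
      ⟨hadjq, Or.inr (Or.inr rfl), Or.inl hcq⟩
    exact (h1.reachable.trans ((reach_in_CC cp hcp).mono hmono)).trans
      (((reach_in_CC cq hcq).mono hmono).symm.trans h2.reachable.symm)
  obtain ⟨w₁, L₁, hL₁d, a0, aL, _, hinj₁, hadj₁, hchord₁, hmem₁⟩ := geo hreach₁
  have hL₁2 : 2 ≤ L₁ := by
    rcases Nat.lt_or_ge L₁ 2 with hlt | hge
    · exfalso
      interval_cases L₁
      · rw [← a0, ← aL] at hne; exact hne rfl
      · have : (gS G S₁).Adj (w₁ 0) (w₁ 1) := hadj₁ 0 (by omega)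
        rw [a0] at this
        have h1 : w₁ 1 = q := by rw [← aL]
        rw [h1] at this
        exact hnadj this.1
    · exact hge
  -- the low path
  set S₂ : Set V := {z | lvl G z + 2 ≤ i} ∪ {q, p} with hS₂
  have hreach₂ : (gS G S₂).Reachable q p := by
    have hrq := desc (G := G) (lvl G q) q rfl (by omega)
    have hrp := desc (G := G) (lvl G p) p rfl (by omega)
    have hmq : (gS G ({z | lvl G z + 1 ≤ lvl G q} ∪ {q})) ≤ gS G S₂ := by
      apply gS_mono G
      intro z hz
      rcases hz with hz | hz
      · left; simp only [Set.mem_setOf_eq] at hz ⊢; omega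
      · right; simp only [Set.mem_singleton_iff] at hz; subst hz; left; rfl
    have hmp : (gS G ({z | lvl G z + 1 ≤ lvl G p} ∪ {p})) ≤ gS G S₂ := by
      apply gS_mono G
      intro z hz
      rcases hz with hz | hz
      · left; simp only [Set.mem_setOf_eq] at hz ⊢; omega
      · right; simp only [Set.mem_singleton_iff] at hz; subst hz; right; rfl
    have hroots : root G q = root G p := by rw [hrootp, hrootq]
    exact (hrq.mono hmq).trans (by rw [hroots]; exact (hrp.mono hmp).symm)
  obtain ⟨w₂, L₂, hL₂d, b0, bL, _, hinj₂, hadj₂, hchord₂, hmem₂⟩ := geo hreach₂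
  have hL₂2 : 2 ≤ L₂ := by
    rcases Nat.lt_or_ge L₂ 2 with hlt | hge
    · exfalso
      interval_cases L₂
      · exact hne (bL.symm.trans b0)
      · have : (gS G S₂).Adj (w₂ 0) (w₂ 1) := hadj₂ 0 (by omega)
        rw [b0] at this
        have h1 : w₂ 1 = p := by rw [← bL]
        rw [h1] at this
        exact hnadj this.1.symm
    · exact hge
  have hmemS₁ : ∀ t, t ≤ L₁ → w₁ t ∈ S₁ := by
    intro t ht
    obtain ⟨z, hz⟩ := hmem₁ t ht (by omega)
    exact hz.2.1
  have hmemS₂ : ∀ t, t ≤ L₂ → w₂ t ∈ S₂ := by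
    intro t ht
    obtain ⟨z, hz⟩ := hmem₂ t ht (by omega)
    exact hz.2.1
  refine glue hc (w₁ := w₁) (w₂ := w₂) (L₁ := L₁) (L₂ := L₂) (by omega) (by omega) (by omega)
    (by rw [bL, a0]) (by rw [aL, b0]) hinj₁ hinj₂
    (fun s hs => (hadj₁ s hs).1) (fun s hs => (hadj₂ s hs).1) ?_ ?_ ?_
  · intro s t hs ht hadj
    have h := hchord₁ s t hs ht ⟨hadj, hmemS₁ s hs, hmemS₁ t ht⟩
    tauto
  · intro s t hs ht hadj
    have h := hchord₂ s t hs ht ⟨hadj, hmemS₂ s hs, hmemS₂ t ht⟩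
    tauto
  · intro s t hs1 hsL ht1 htL
    have hwsM := hmemS₁ s (by omega)
    have hwtM := hmemS₂ t (by omega)
    have hwsp : w₁ s ≠ p := by
      intro heq; rw [← a0] at heq
      have := hinj₁ s 0 (by omega) (by omega) heq; omega
    have hwsq : w₁ s ≠ q := by
      intro heq; rw [← aL] at heq
      have := hinj₁ s L₁ (by omega) (by omega) heq; omega
    have hwtq : w₂ t ≠ q := by
      intro heq; rw [← b0] at heq
      have := hinj₂ t 0 (by omega) (by omega) heq; omega
    have hwtp : w₂ t ≠ p := by
      intro heq; rw [← bL] at heq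
      have := hinj₂ t L₂ (by omega) (by omega) heq; omega
    have hwsC : w₁ s ∈ CC G v₀ := by
      rcases hwsM with h | h
      · exact h
      · rcases h with h | h
        · exact absurd h hwsp
        · exact absurd h hwsq
    have hwtlow : lvl G (w₂ t) + 2 ≤ i := by
      rcases hwtM with h | h
      · exact h
      · rcases h with h | h
        · exact absurd h hwtq
        · exact absurd h hwtp
    have hwslvl : i ≤ lvl G (w₁ s) := hwsC.1
    constructor
    · exact (ne_of_lvl_ne (G := G) (by omega)).symm.symm
    · intro hadj
      exact not_adj_of_lvl_gap (by omega) hadj.symm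




lemma lvl_root (G : SimpleGraph V) (v : V) : lvl G (root G v) = 0 := by
  rw [lvl_zero_iff]
  exact (root_eq_of_reachable (reachable_root G v)).symm

lemma bag_bound [Fintype V] {G : SimpleGraph V}
    (hc : ∀ n, 4 ≤ n → IsEmpty (cycleGraph n ↪g G))
    {k Δ : ℕ} (hclq : ∀ s : Set V, G.IsClique s → s.ncard ≤ k + 1)
    (hk1 : 1 ≤ k) (hΔ : 2 ≤ Δ) (hdeg : ∀ v : V, (G.neighborSet v).ncard ≤ Δ)
    (v₀ : V) : (Bag G v₀).ncard ≤ k * (Δ - 1) := by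
  classical
  have hkΔ1 : 1 ≤ k * (Δ - 1) := by
    have : 1 ≤ Δ - 1 := by omega
    calc 1 = 1 * 1 := by ring
    _ ≤ k * (Δ - 1) := Nat.mul_le_mul hk1 this
  rcases Nat.eq_zero_or_pos (lvl G v₀) with hi0 | hi1
  · -- level 0 : bag is a single root
    have hsub : Bag G v₀ ⊆ {v₀} := by
      intro x hx
      obtain ⟨hxl, hxr⟩ := hx
      have h1 : x = root G x := lvl_zero_iff.mp (by omega)
      have h2 : root G x = root G v₀ := root_eq_of_reachable (hxr.mono (gS_le G _))
      have h3 : v₀ = root G v₀ := lvl_zero_iff.mp hi0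
      simp only [Set.mem_singleton_iff]
      rw [h1, h2, ← h3]
    calc (Bag G v₀).ncard ≤ ({v₀} : Set V).ncard :=
          Set.ncard_le_ncard hsub (Set.toFinite _)
    _ = 1 := Set.ncard_singleton v₀
    _ ≤ k * (Δ - 1) := hkΔ1
  -- level ≥ 1
  set i := lvl G v₀ with hidef
  set P := PP G v₀ with hPdef
  set B := Bag G v₀ with hBdef
  have hPlvl : ∀ p ∈ P, lvl G p + 1 = i := fun p hp => hp.1
  have hBlvl : ∀ b ∈ B, lvl G b = i := fun b hb => hb.1
  have hPcl := PP_clique hc (v₀ := v₀)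
  obtain ⟨p₀, hp₀, hp₀adj⟩ := PP_nonempty (G := G) (v₀ := v₀) hi1
  have hPne : P.Nonempty := ⟨p₀, hp₀⟩
  have hPfin : P.Finite := Set.toFinite _
  have hBfin : B.Finite := Set.toFinite _
  have hs1 : 1 ≤ P.ncard := (Set.ncard_pos hPfin).mpr hPne
  -- |P| ≤ k
  have hsk : P.ncard ≤ k := by
    rcases Nat.lt_or_ge i 2 with hi2 | hi2
    · -- i = 1
      have hsub := PP_single (G := G) (v₀ := v₀) (by omega)
      calc P.ncard ≤ ({root G v₀} : Set V).ncard :=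
            Set.ncard_le_ncard hsub (Set.toFinite _)
      _ = 1 := Set.ncard_singleton _
      _ ≤ k := hk1
    · -- i ≥ 2 : common neighbour argument
      set Pf := hPfin.toFinset with hPf
      have hcard : Pf.card = P.ncard := (Set.ncard_eq_toFinset_card P hPfin).symm
      obtain ⟨x, hxl, hxadj⟩ := common_nbr hc Pf.card Pf (i - 1) rfl
        (by rw [hcard]; omega) (by omega)
        (fun p hp => by
          have := hPlvl p (hPfin.mem_toFinset.mp hp); omega)
        (fun p hp q hq hne => hPcl p (hPfin.mem_toFinset.mp hp) q (hPfin.mem_toFinset.mp hq) hne)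
      have hxP : x ∉ P := by
        intro hxp
        have := hPlvl x hxp
        omega
      have hcl : G.IsClique (insert x P) := by
        rw [isClique_iff]
        intro a ha b hb hne
        rcases ha with rfl | ha <;> rcases hb with rfl | hb
        · exact absurd rfl hne
        · exact hxadj b (hPfin.mem_toFinset.mpr hb)
        · exact (hxadj a (hPfin.mem_toFinset.mpr ha)).symm
        · exact hPcl a ha b hb hne
      have := hclq (insert x P) hcl
      rw [Set.ncard_insert_of_notMem hxP hPfin] at this
      omega
  -- the covering of the bag by neighbourhoods of P
  set Pf := hPfin.toFinset with hPf
  have hcardP : Pf.card = P.ncard := (Set.ncard_eq_toFinset_card P hPfin).symm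
  have hcover : B.ncard ≤ ∑ p ∈ Pf, (G.neighborSet p ∩ B).ncard := by
    have hsub : hBfin.toFinset ⊆
        Pf.biUnion (fun p => (Set.toFinite (G.neighborSet p ∩ B)).toFinset) := by
      intro b hb
      rw [Set.Finite.mem_toFinset] at hb
      obtain ⟨p, hp, hadj⟩ := Bag_parent (G := G) (v₀ := v₀) hi1 b hb
      rw [Finset.mem_biUnion]
      exact ⟨p, hPfin.mem_toFinset.mpr hp,
        (Set.toFinite _).mem_toFinset.mpr ⟨hadj, hb⟩⟩
    calc B.ncard = hBfin.toFinset.card := Set.ncard_eq_toFinset_card B hBfin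
    _ ≤ (Pf.biUnion (fun p => (Set.toFinite (G.neighborSet p ∩ B)).toFinset)).card :=
        Finset.card_le_card hsub
    _ ≤ ∑ p ∈ Pf, ((Set.toFinite (G.neighborSet p ∩ B)).toFinset).card :=
        Finset.card_biUnion_le
    _ = ∑ p ∈ Pf, (G.neighborSet p ∩ B).ncard := by
        apply Finset.sum_congr rfl
        intro p _
        exact (Set.ncard_eq_toFinset_card _ _).symm
  rcases Nat.lt_or_ge i 2 with hi2 | hi2
  · -- case i = 1
    have hPsub := PP_single (G := G) (v₀ := v₀) (by omega)
    have hPeq : P = {root G v₀} := by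
      apply Set.eq_of_subset_of_subset hPsub
      intro z hz
      rw [Set.mem_singleton_iff] at hz
      obtain ⟨w, hw⟩ := hPne
      have := hPsub hw
      rw [Set.mem_singleton_iff] at this
      rw [hz, ← this]
      exact hw
    set rt := root G v₀ with hrt
    have hrtl : lvl G rt = 0 := lvl_root G v₀
    have hrtadj : ∀ b ∈ B, G.Adj rt b := by
      intro b hb
      obtain ⟨p, hp, hadj⟩ := Bag_parent (G := G) (v₀ := v₀) hi1 b hb
      have : p = rt := hPsub hp
      rwa [← this]
    have htri : ∀ b ∈ B, ∀ b' ∈ B, b ≠ b' → ¬ G.Adj b b' → True := fun _ _ _ _ _ _ => trivial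
    rcases Nat.lt_or_ge k 2 with hk2 | hk2
    · -- k = 1 : the bag is a single vertex
      have hk1' : k = 1 := by omega
      have hnoadj : ∀ b ∈ B, ∀ b' ∈ B, b ≠ b' → ¬ G.Adj b b' := by
        intro b hb b' hb' hne hadj
        have hcl : G.IsClique {rt, b, b'} := by
          rw [isClique_iff]
          intro a ha c hc hnac
          simp only [Set.mem_insert_iff, Set.mem_singleton_iff] at ha hc
          rcases ha with rfl | rfl | rfl <;> rcases hc with rfl | rfl | rfl
          · exact absurd rfl hnac
          · exact hrtadj _ hb
          · exact hrtadj _ hb'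
          · exact (hrtadj _ hb).symm
          · exact absurd rfl hnac
          · exact hadj
          · exact (hrtadj _ hb').symm
          · exact hadj.symm
          · exact absurd rfl hnac
        have hrtb : rt ≠ b := ne_of_lvl_ne (G := G) (by
          have := hBlvl b hb; omega)
        have hrtb' : rt ≠ b' := ne_of_lvl_ne (G := G) (by
          have := hBlvl b' hb'; omega)
        have h3 : ({rt, b, b'} : Set V).ncard = 3 := by
          rw [Set.ncard_insert_of_notMem (by simp [hrtb, hrtb']) (Set.toFinite _),
            Set.ncard_pair hne]
        have := hclq _ hcl
        rw [h3] at this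
        omega
      have hone : ∀ b ∈ B, ∀ b' ∈ B, b = b' := by
        by_contra hbig
        push_neg at hbig
        obtain ⟨b₀, hb₀, b₀', hb₀', hne₀⟩ := hbig
        set D : Set ℕ :=
          {d | ∃ b ∈ B, ∃ b' ∈ B, b ≠ b' ∧ (gS G (CC G v₀)).dist b' b = d} with hD
        have hDne : D.Nonempty := ⟨_, b₀, hb₀, b₀', hb₀', hne₀, rfl⟩
        obtain ⟨b, hb, b', hb', hne, hdist⟩ := Nat.sInf_mem hDne
        have hreach : (gS G (CC G v₀)).Reachable b' b :=
          (reach_in_CC b' (Bag_subset_CC G v₀ hb')).trans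
            (reach_in_CC b (Bag_subset_CC G v₀ hb)).symm
        obtain ⟨w₂, L₂, hL₂d, b0, bL, hd₂, hinj₂, hadj₂, hchord₂, hmem₂⟩ := geo hreach
        have hL₂eq : L₂ = sInf D := by rw [hL₂d, hdist]
        have hmemS : ∀ t, t ≤ L₂ → w₂ t ∈ CC G v₀ := by
          intro t ht
          have h1 : 1 ≤ L₂ := by
            rcases Nat.eq_zero_or_pos L₂ with h0 | h1
            · exfalso
              have : w₂ 0 = w₂ L₂ := by rw [h0]
              rw [b0, bL] at this
              exact hne this.symm
            · exact h1
          obtain ⟨z, hz⟩ := hmem₂ t ht h1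
          exact hz.2.1
        have hL₂2 : 2 ≤ L₂ := by
          rcases Nat.lt_or_ge L₂ 2 with hlt | hge
          · exfalso
            interval_cases L₂
            · exact hne (b0.symm.trans bL).symm
            · have : (gS G (CC G v₀)).Adj (w₂ 0) (w₂ 1) := hadj₂ 0 (by omega)
              rw [b0] at this
              have h1 : w₂ 1 = b := by rw [← bL]
              rw [h1] at this
              exact hnoadj b hb b' hb' hne this.1.symm
          · exact hge
        -- interior vertices have level ≥ 2
        have hint : ∀ t, 1 ≤ t → t < L₂ → 2 ≤ lvl G (w₂ t) := by
          intro t ht1 htL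
          have hzC : w₂ t ∈ CC G v₀ := hmemS t (by omega)
          have hzl : 1 ≤ lvl G (w₂ t) := by
            have := hzC.1; omega
          rcases Nat.lt_or_ge (lvl G (w₂ t)) 2 with hl2 | hl2
          · exfalso
            have hzB : w₂ t ∈ B := ⟨by omega, hzC.2⟩
            have hzneb' : w₂ t ≠ b' := by
              intro heq; rw [← b0] at heq
              have := hinj₂ t 0 (by omega) (by omega) heq; omega
            have htD : t ∈ D := ⟨w₂ t, hzB, b', hb', hzneb', hd₂ t (by omega)⟩
            have := Nat.sInf_le htD
            omega
          · exact hl2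
        -- glue with the explicit path b - rt - b'
        set w₁ : ℕ → V := fun t => if t = 0 then b else if t = 1 then rt else b' with hw₁
        have e0 : w₁ 0 = b := rfl
        have e1 : w₁ 1 = rt := rfl
        have e2 : w₁ 2 = b' := rfl
        have hbrt : b ≠ rt := (ne_of_lvl_ne (G := G) (by have := hBlvl b hb; omega))
        have hbrt' : b' ≠ rt := (ne_of_lvl_ne (G := G) (by have := hBlvl b' hb'; omega))
        refine glue hc (w₁ := w₁) (w₂ := w₂) (L₁ := 2) (L₂ := L₂) (by omega) (by omega)
          (by omega) (by rw [bL, e0]) (by rw [e2, b0]) ?_ hinj₂ ?_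
          (fun s hs => (hadj₂ s hs).1) ?_ ?_ ?_
        · intro s t hs ht heq
          interval_cases s <;> interval_cases t <;>
            simp only [e0, e1, e2] at heq <;>
            first
              | rfl
              | exact absurd heq hbrt | exact absurd heq.symm hbrt
              | exact absurd heq hbrt' | exact absurd heq.symm hbrt'
              | exact absurd heq hne | exact absurd heq.symm hne
        · intro s hs
          interval_cases s
          · rw [e0, e1]; exact (hrtadj b hb).symm
          · rw [e1, e2]; exact hrtadj b' hb'
        · intro s t hs ht hadj
          interval_cases s <;> interval_cases t <;>
            first
              | (exfalso; exact hadj.ne rfl)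
              | omega
              | (exfalso; rw [e0, e2] at hadj; exact hnoadj b hb b' hb' hne hadj)
              | (exfalso; rw [e2, e0] at hadj; exact hnoadj b hb b' hb' hne hadj.symm)
        · intro s t hs ht hadj
          have h := hchord₂ s t hs ht ⟨hadj, hmemS s hs, hmemS t ht⟩
          tauto
        · intro s t hs1 hsL ht1 htL
          have hs1' : s = 1 := by omega
          subst hs1'
          have hzl := hint t ht1 htL
          rw [e1]
          constructor
          · exact ne_of_lvl_ne (G := G) (by omega)
          · exact not_adj_of_lvl_gap (by omega)
      calc B.ncard ≤ 1 := by
            rcases Set.eq_empty_or_nonempty B with hB | ⟨b, hb⟩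
            · rw [hB]; simp
            · have hsub : B ⊆ {b} := fun x hx => by
                rw [Set.mem_singleton_iff]; exact hone x hx b hb
              calc B.ncard ≤ ({b} : Set V).ncard := Set.ncard_le_ncard hsub (Set.toFinite _)
              _ = 1 := Set.ncard_singleton b
      _ ≤ k * (Δ - 1) := hkΔ1
    · -- k ≥ 2 : |B| ≤ Δ suffices
      have hterm : ∀ p ∈ Pf, (G.neighborSet p ∩ B).ncard ≤ Δ := by
        intro p _
        calc (G.neighborSet p ∩ B).ncard ≤ (G.neighborSet p).ncard :=
              Set.ncard_le_ncard Set.inter_subset_left (Set.toFinite _)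
        _ ≤ Δ := hdeg p
      have hPf1 : Pf.card = 1 := by
        rw [hcardP]
        have : P.ncard ≤ 1 := by
          calc P.ncard ≤ ({root G v₀} : Set V).ncard :=
                Set.ncard_le_ncard hPsub (Set.toFinite _)
          _ = 1 := Set.ncard_singleton _
        omega
      calc B.ncard ≤ ∑ p ∈ Pf, (G.neighborSet p ∩ B).ncard := hcover
      _ ≤ ∑ _p ∈ Pf, Δ := Finset.sum_le_sum hterm
      _ = Pf.card * Δ := by rw [Finset.sum_const, smul_eq_mul]
      _ = Δ := by rw [hPf1, one_mul]
      _ ≤ 2 * (Δ - 1) := by omega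
      _ ≤ k * (Δ - 1) := Nat.mul_le_mul_right _ hk2
  · -- case i ≥ 2
    have hterm : ∀ p ∈ Pf, (G.neighborSet p ∩ B).ncard + P.ncard ≤ Δ := by
      intro p hpf
      have hp : p ∈ P := hPfin.mem_toFinset.mp hpf
      have hplvl : lvl G p + 1 = i := hPlvl p hp
      obtain ⟨pp, hppadj, hpplvl⟩ := lvl_parent (G := G) (v := p) (by omega)
      set A1 : Set V := P \ {p} with hA1
      set A3 : Set V := G.neighborSet p ∩ B with hA3
      have hsubN : A1 ∪ ({pp} ∪ A3) ⊆ G.neighborSet p := by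
        intro z hz
        rcases hz with hz | hz | hz
        · have hzp : z ≠ p := by simpa using hz.2
          exact hPcl p hp z hz.1 hzp.symm
        · rw [Set.mem_singleton_iff] at hz; subst hz
          exact hppadj.symm
        · exact hz.1
      have hd13 : Disjoint A1 ({pp} ∪ A3) := by
        rw [Set.disjoint_left]
        intro z hz1 hz2
        have hzlvl : lvl G z + 1 = i := hPlvl z hz1.1
        rcases hz2 with hz2 | hz2
        · rw [Set.mem_singleton_iff] at hz2; subst hz2; omega
        · have := hBlvl z hz2.2; omega
      have hd3 : Disjoint ({pp} : Set V) A3 := by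
        rw [Set.disjoint_left]
        intro z hz1 hz2
        rw [Set.mem_singleton_iff] at hz1; subst hz1
        have := hBlvl z hz2.2
        omega
      have hcA1 : A1.ncard = P.ncard - 1 := Set.ncard_diff_singleton_of_mem hp
      have hunion : (A1 ∪ ({pp} ∪ A3)).ncard = A1.ncard + (1 + A3.ncard) := by
        rw [Set.ncard_union_eq hd13 (Set.toFinite _) (Set.toFinite _),
          Set.ncard_union_eq hd3 (Set.toFinite _) (Set.toFinite _),
          Set.ncard_singleton]
      have hle : (A1 ∪ ({pp} ∪ A3)).ncard ≤ Δ := by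
        calc (A1 ∪ ({pp} ∪ A3)).ncard ≤ (G.neighborSet p).ncard :=
              Set.ncard_le_ncard hsubN (Set.toFinite _)
        _ ≤ Δ := hdeg p
      rw [hunion, hcA1] at hle
      omega
    have hstep : ∀ p ∈ Pf, (G.neighborSet p ∩ B).ncard ≤ Δ - P.ncard := by
      intro p hp
      have := hterm p hp
      omega
    calc B.ncard ≤ ∑ p ∈ Pf, (G.neighborSet p ∩ B).ncard := hcover
    _ ≤ ∑ _p ∈ Pf, (Δ - P.ncard) := Finset.sum_le_sum hstep
    _ = Pf.card * (Δ - P.ncard) := by rw [Finset.sum_const, smul_eq_mul]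
    _ = P.ncard * (Δ - P.ncard) := by rw [hcardP]
    _ ≤ P.ncard * (Δ - 1) := Nat.mul_le_mul_left _ (Nat.sub_le_sub_left hs1 Δ)
    _ ≤ k * (Δ - 1) := Nat.mul_le_mul_right _ hsk


end Stmt15Aux

namespace Stmt15Aux

/-- the level setoid: same level and connected through high levels -/
def lvlSetoid (G : SimpleGraph V) : Setoid V where
  r u v := lvl G u = lvl G v ∧ (GammaA G (lvl G u)).Reachable u v
  iseqv := ⟨fun u => ⟨rfl, Reachable.refl u⟩,
    fun {u v} h => ⟨h.1.symm, by rw [← h.1]; exact h.2.symm⟩,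
    fun {u v w} h1 h2 => ⟨h1.1.trans h2.1,
      h1.2.trans (show (GammaA G (lvl G u)).Reachable v w by rw [h1.1]; exact h2.2)⟩⟩

noncomputable def qmap (G : SimpleGraph V) : V → Quotient (lvlSetoid G) := Quotient.mk _

noncomputable def qlvl (G : SimpleGraph V) : Quotient (lvlSetoid G) → ℕ :=
  Quotient.lift (lvl G) (fun _ _ h => h.1)

lemma qlvl_qmap (G : SimpleGraph V) (v : V) : qlvl G (qmap G v) = lvl G v := rfl

end Stmt15Aux


namespace Stmt15Aux

lemma quot_adj_lvl {G : SimpleGraph V} {a b : Quotient (lvlSetoid G)}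
    (h : (quotientGraph G (qmap G)).Adj a b) :
    qlvl G a = qlvl G b + 1 ∨ qlvl G b = qlvl G a + 1 := by
  obtain ⟨hne, u, v, huv, hu, hv⟩ := h
  subst hu; subst hv
  have l1 := lvl_adj huv
  have l2 := lvl_adj huv.symm
  rw [qlvl_qmap, qlvl_qmap]
  by_cases heq : lvl G u = lvl G v
  · exfalso
    apply hne
    apply Quotient.sound
    refine ⟨heq, ?_⟩
    have hed : (GammaA G (lvl G u)).Adj u v := ⟨huv, by simp, by
      simp only [Set.mem_setOf_eq]; omega⟩
    exact hed.reachable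
  · omega

lemma quot_down_unique {G : SimpleGraph V} {a b b' : Quotient (lvlSetoid G)}
    (hab : (quotientGraph G (qmap G)).Adj a b) (hab' : (quotientGraph G (qmap G)).Adj a b')
    (h1 : qlvl G b + 1 = qlvl G a) (h2 : qlvl G b' + 1 = qlvl G a) : b = b' := by
  obtain ⟨hne, u, v, huv, hu, hv⟩ := hab
  obtain ⟨hne', u', v', huv', hu', hv'⟩ := hab'
  subst hu; subst hv; subst hv'
  set m := qlvl G (qmap G v) with hm
  have hlv : lvl G v = m := rfl
  have hlv' : lvl G v' = m := by
    have : qlvl G (qmap G v') = lvl G v' := rfl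
    omega
  have hlu : lvl G u = m + 1 := by
    have : qlvl G (qmap G u) = lvl G u := rfl
    omega
  have hr0 : (lvlSetoid G).r u' u := Quotient.exact hu'
  have hr : (lvlSetoid G).r u u' := ⟨hr0.1.symm, by rw [← hr0.1]; exact hr0.2.symm⟩
  have hlu' : lvl G u' = m + 1 := by rw [← hr.1]; exact hlu
  apply Quotient.sound
  refine ⟨by rw [hlv, hlv'], ?_⟩
  rw [hlv]
  have hedge1 : (gS G {y | m ≤ lvl G y}).Adj v u := ⟨huv.symm, by simp [hlv], by simp [hlu]⟩
  have hedge2 : (gS G {y | m ≤ lvl G y}).Adj u' v' := ⟨huv', by simp [hlu'], by simp [hlv']⟩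
  have hmid : (gS G {y | m ≤ lvl G y}).Reachable u u' := by
    have := hr.2
    rw [show lvl G u = m + 1 from hlu] at this
    exact this.mono (gS_mono G (fun z hz => by
      simp only [Set.mem_setOf_eq] at hz ⊢; omega))
  exact (hedge1.reachable.trans hmid).trans hedge2.reachable

lemma quot_acyclic {G : SimpleGraph V} : (quotientGraph G (qmap G)).IsAcyclic := by
  classical
  intro a c hcyc
  have hane : (c.support.toFinset : Finset (Quotient (lvlSetoid G))).Nonempty :=
    ⟨a, by simp [Walk.start_mem_support]⟩
  obtain ⟨x, hxmem, hxmax⟩ := Finset.exists_max_image c.support.toFinset (qlvl G) hane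
  rw [List.mem_toFinset] at hxmem
  set c' := c.rotate x hxmem with hc'
  have hcyc' : c'.IsCycle := hcyc.rotate (hu := hxmem)
  have hsup : ∀ y ∈ c'.support, qlvl G y ≤ qlvl G x := by
    intro y hy
    rw [Walk.support_eq_cons c', List.mem_cons] at hy
    rcases hy with rfl | hy
    · exact le_refl _
    · have hperm := Walk.support_rotate c x hxmem
      have : y ∈ c.support.tail := hperm.perm.mem_iff.mp hy
      exact hxmax y (by
        rw [List.mem_toFinset]
        rw [Walk.support_eq_cons c]
        exact List.mem_cons_of_mem _ this)
  set len := c'.length with hlen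
  have hlen3 : 3 ≤ len := hcyc'.three_le_length
  set u₁ := c'.getVert 1 with hu₁
  set u₂ := c'.getVert (len - 1) with hu₂
  have adj1 : (quotientGraph G (qmap G)).Adj x u₁ := by
    have := c'.adj_getVert_succ (i := 0) (by omega)
    rwa [Walk.getVert_zero] at this
  have adj2 : (quotientGraph G (qmap G)).Adj u₂ x := by
    have := c'.adj_getVert_succ (i := len - 1) (by omega)
    have he : len - 1 + 1 = len := by omega
    rw [he] at this
    rwa [show c'.getVert len = x from c'.getVert_length] at this
  have mem1 : u₁ ∈ c'.support := by
    have := support_get? c' 1 (by omega)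
    exact List.mem_of_getElem? this
  have mem2 : u₂ ∈ c'.support := by
    have := support_get? c' (len - 1) (by omega)
    exact List.mem_of_getElem? this
  have down1 : qlvl G u₁ + 1 = qlvl G x := by
    rcases quot_adj_lvl adj1 with h | h
    · omega
    · have := hsup u₁ mem1; omega
  have down2 : qlvl G u₂ + 1 = qlvl G x := by
    rcases quot_adj_lvl adj2 with h | h
    · have := hsup u₂ mem2; omega
    · omega
  have hueq : u₁ = u₂ := quot_down_unique adj1 adj2.symm down1 down2
  -- contradiction with nodup of the support tail
  have s1 := support_get? c' 1 (by omega)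
  have s2 := support_get? c' (len - 1) (by omega)
  rw [← hu₁] at s1
  rw [← hu₂] at s2
  rw [Walk.support_eq_cons c'] at s1 s2
  rw [List.getElem?_cons_succ] at s1
  have he2 : len - 1 = (len - 2) + 1 := by omega
  rw [he2, List.getElem?_cons_succ] at s2
  rw [hueq] at s1
  have hnodup : c'.support.tail.Nodup := hcyc'.support_nodup
  have hlent : c'.support.tail.length = len := by
    have := c'.length_support
    rw [Walk.support_eq_cons c'] at this
    simp [hlen]
  have : (0 : ℕ) = len - 2 := by
    apply (List.getElem?_inj (by omega) hnodup).mp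
    rw [s1, s2]
  omega

end Stmt15Aux

namespace Stmt15Aux
variable {V : Type}

lemma chordal_top (V : Type) : ∀ n, 4 ≤ n → IsEmpty (cycleGraph n ↪g (⊤ : SimpleGraph V)) := by
  intro n hn
  constructor
  intro e
  have h0 : (0 : ℕ) < n := by omega
  have h2 : (2 : ℕ) < n := by omega
  set i : Fin n := ⟨0, h0⟩ with hi
  set j : Fin n := ⟨2, h2⟩ with hj
  have hne : e i ≠ e j := by
    intro heq
    have := e.injective heq
    rw [hi, hj] at this
    simp [Fin.ext_iff] at this
  have hadj : (⊤ : SimpleGraph V).Adj (e i) (e j) := hne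
  have hcyc : (cycleGraph n).Adj i j := e.map_rel_iff.mp hadj
  rw [cycleGraph_adj'] at hcyc
  rcases hcyc with h | h
  · rw [fin_sub_val hn] at h
    simp only [hi, hj] at h
    omega
  · rw [fin_sub_val hn] at h
    simp only [hi, hj] at h
    omega

end Stmt15Aux

open Stmt15Aux in
theorem tpw_aux {V : Type} [Fintype V] (G : SimpleGraph V)
    (hc : ∀ n, 4 ≤ n → IsEmpty (cycleGraph n ↪g G))
    (Δ : ℕ)
    (hΔmax : IsGreatest {d | ∃ v, (G.neighborSet v).ncard = d} Δ) (hΔ : 2 ≤ Δ)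
    (k : ℕ) (hktw : k ∈ {k | ∃ H : SimpleGraph V, G ≤ H ∧
      (∀ n, 4 ≤ n → IsEmpty (cycleGraph n ↪g H)) ∧
      ∀ s : Set V, H.IsClique s → s.ncard ≤ k + 1}) :
    ∃ (ι : Type) (f : V → ι), (Function.Surjective f ∧ (quotientGraph G f).IsAcyclic) ∧
      ∀ i, (f ⁻¹' {i}).ncard ≤ k * (Δ - 1) := by
  classical
  obtain ⟨H, hGH, hHch, hHclq⟩ := hktw
  have hclq : ∀ s : Set V, G.IsClique s → s.ncard ≤ k + 1 := fun s hs => hHclq s (hs.mono hGH)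
  have hdeg : ∀ v, (G.neighborSet v).ncard ≤ Δ := fun v => hΔmax.2 ⟨v, rfl⟩
  have hk1 : 1 ≤ k := by
    obtain ⟨v, hv⟩ := hΔmax.1
    have hvne : (G.neighborSet v).Nonempty := by
      rw [← Set.ncard_pos (Set.toFinite _)]
      omega
    obtain ⟨w, hw⟩ := hvne
    have hadj : G.Adj v w := hw
    have hcl2 : G.IsClique {v, w} := by
      rw [isClique_iff]
      intro x hx y hy hne
      simp only [Set.mem_insert_iff, Set.mem_singleton_iff] at hx hy
      rcases hx with rfl | rfl <;> rcases hy with rfl | rfl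
      · exact absurd rfl hne
      · exact hadj
      · exact hadj.symm
      · exact absurd rfl hne
    have := hclq {v, w} hcl2
    rw [Set.ncard_pair hadj.ne] at this
    omega
  refine ⟨Quotient (lvlSetoid G), qmap G, ⟨?_, quot_acyclic⟩, ?_⟩
  · exact fun a => ⟨a.out, Quotient.out_eq a⟩
  · intro q
    obtain ⟨v₀, rfl⟩ : ∃ v₀, qmap G v₀ = q := ⟨q.out, Quotient.out_eq q⟩
    have hfib : (qmap G) ⁻¹' {qmap G v₀} = Bag G v₀ := by
      ext x
      simp only [Set.mem_preimage, Set.mem_singleton_iff]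
      constructor
      · intro h
        have hr : (lvlSetoid G).r x v₀ := Quotient.exact h
        exact ⟨hr.1, by rw [← hr.1]; exact hr.2⟩
      · rintro ⟨h1, h2⟩
        exact Quotient.sound ⟨h1, by rw [h1]; exact h2⟩
    rw [hfib]
    exact bag_bound hc hclq hk1 hΔ hdeg v₀


/-- Every chordal graph with maximum degree `Δ ≥ 2` has tree-partition-width at most
`tw(G)·(Δ-1)`. -/
theorem stmt15 {V : Type} [Fintype V] (G : SimpleGraph V) (hc : IsChordal G)
    (Δ : ℕ) (hΔmax : HasMaxDegree G Δ) (hΔ : 2 ≤ Δ) :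
    tpw G ≤ treewidth G * (Δ - 1) := by
  classical
  have hTne : {k | ∃ H : SimpleGraph V, G ≤ H ∧ IsChordal H ∧
      ∀ s : Set V, H.IsClique s → s.ncard ≤ k + 1}.Nonempty := by
    refine ⟨Fintype.card V, ⊤, le_top, Stmt15Aux.chordal_top V, ?_⟩
    intro s _
    calc s.ncard ≤ (Set.univ : Set V).ncard :=
          Set.ncard_le_ncard (Set.subset_univ s) (Set.toFinite _)
    _ = Fintype.card V := by rw [Set.ncard_univ, Nat.card_eq_fintype_card]
    _ ≤ Fintype.card V + 1 := by omega
  have hmem : treewidth G ∈ {k | ∃ H : SimpleGraph V, G ≤ H ∧ IsChordal H ∧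
      ∀ s : Set V, H.IsClique s → s.ncard ≤ k + 1} := Nat.sInf_mem hTne
  obtain ⟨ι, f, ⟨hsurj, hacyc⟩, hbound⟩ :=
    tpw_aux G hc Δ hΔmax hΔ (treewidth G) hmem
  exact Nat.sInf_le ⟨ι, f, ⟨hsurj, hacyc⟩, hbound⟩
end
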